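/- arXiv:1706.08728 — 4 statements merged into one kernel-verified Lean document; each statement's English description precedes it below -/
import Mathlib

section
/- Lower bound for the Agmon distance via a separating annulus: let z ∈ Ω, let W ⊆ W' be closed neighborhoods of z with α := inf{|x − y| : x ∈ Ω \ W', y ∈ W} > 0, and suppose there is K > 0 with inf_{x ∈ cl(W' \ W)} g(x) > K/α. Then for every set B ⊆ Ω with B ∩ W' = ∅, one has inf_{y ∈ B} d_a(z,y) > K. -/
/-!
Split an admissible curve from `z ∈ W` to `y ∉ W'` at its last visit `t₁` of `W` before its
first exit time `t₂` from `W'`. On `(t₁, t₂)` the curve runs through the annulus `W' \ W`, where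
`g ≥ m := inf_{cl(W' \ W)} g`, and `γ t₂` lies in the closure of `Ω \ W'`, at distance at least
`α` from `γ t₁ ∈ W`. Since a Lipschitz curve is at least as long as the distance between its
endpoints, its Agmon length is at least `m α > K`.
-/

open MeasureTheory Topology
open scoped ENNReal

/-- The Agmon distance (with values in `[0,∞]`) on a set `Ω` with weight `g`: the infimum
over Lipschitz curves `γ : [0,1] → Ω` joining `x` to `y` of `∫_0^1 g(γ(t)) |γ'(t)| dt`. -/
noncomputable def agmonDistE {d : ℕ} (Ω : Set (EuclideanSpace ℝ (Fin d)))
    (g : EuclideanSpace ℝ (Fin d) → ℝ) (x y : EuclideanSpace ℝ (Fin d)) : ℝ≥0∞ :=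
  sInf {L : ℝ≥0∞ | ∃ γ : ℝ → EuclideanSpace ℝ (Fin d),
    (∃ C : NNReal, LipschitzOnWith C γ (Set.Icc (0:ℝ) 1)) ∧
    (∀ t ∈ Set.Icc (0:ℝ) 1, γ t ∈ Ω) ∧ γ 0 = x ∧ γ 1 = y ∧
    L = ∫⁻ t in Set.Icc (0:ℝ) 1, ENNReal.ofReal (g (γ t) * ‖deriv γ t‖)}

open Set

section Crossing

variable {X : Type*} [TopologicalSpace X] {γ : ℝ → X} {a b : ℝ}

theorem ContinuousOn.exists_last_mem_of_isClosed {W : Set X} (hγ : ContinuousOn γ (Icc a b))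
    (hab : a ≤ b) (hW : IsClosed W) (ha : γ a ∈ W) :
    ∃ t ∈ Icc a b, γ t ∈ W ∧ ∀ s ∈ Ioc t b, γ s ∉ W := by
  have hS : IsCompact (Icc a b ∩ γ ⁻¹' W) :=
    isCompact_Icc.of_isClosed_subset (hγ.preimage_isClosed_of_isClosed isClosed_Icc hW)
      inter_subset_left
  obtain ⟨t, ⟨htab, hγt⟩, hmax⟩ := hS.exists_isGreatest ⟨a, left_mem_Icc.2 hab, ha⟩
  refine ⟨t, htab, hγt, fun s hs hγs => ?_⟩
  exact (hmax ⟨Ioc_subset_Icc_self (Ioc_subset_Ioc_left htab.1 hs), hγs⟩).not_gt hs.1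

theorem ContinuousOn.exists_first_exit {W : Set X} (hγ : ContinuousOn γ (Icc a b))
    (hab : a ≤ b) (hb : γ b ∉ W) :
    ∃ t ∈ Icc a b, γ t ∈ closure (γ '' Icc a b \ W) ∧ ∀ s ∈ Ico a t, γ s ∈ W := by
  have hS : IsCompact (Icc a b ∩ γ ⁻¹' closure (γ '' Icc a b \ W)) :=
    isCompact_Icc.of_isClosed_subset
      (hγ.preimage_isClosed_of_isClosed isClosed_Icc isClosed_closure) inter_subset_left
  have hbS : b ∈ Icc a b ∩ γ ⁻¹' closure (γ '' Icc a b \ W) :=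
    ⟨right_mem_Icc.2 hab, subset_closure ⟨mem_image_of_mem γ (right_mem_Icc.2 hab), hb⟩⟩
  obtain ⟨t, ⟨htab, hγt⟩, hmin⟩ := hS.exists_isLeast ⟨b, hbS⟩
  refine ⟨t, htab, hγt, fun s hs => by_contra fun hγs => ?_⟩
  have hsab : s ∈ Icc a b := ⟨hs.1, hs.2.le.trans htab.2⟩
  exact (hmin ⟨hsab, subset_closure ⟨mem_image_of_mem γ hsab, hγs⟩⟩).not_gt hs.2

theorem ContinuousOn.exists_crossing {W W' : Set X} (hγ : ContinuousOn γ (Icc a b))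
    (hab : a ≤ b) (hW : IsClosed W) (ha : γ a ∈ W) (hb : γ b ∉ W') :
    ∃ t₁ t₂, a ≤ t₁ ∧ t₁ ≤ t₂ ∧ t₂ ≤ b ∧ γ t₁ ∈ W ∧ γ t₂ ∈ closure (γ '' Icc a b \ W') ∧
      ∀ t ∈ Ioo t₁ t₂, γ t ∈ W' \ W := by
  obtain ⟨t₂, ⟨hat₂, ht₂b⟩, hγt₂, hbefore⟩ := hγ.exists_first_exit hab hb
  obtain ⟨t₁, ⟨hat₁, ht₁t₂⟩, hγt₁, hafter⟩ :=
    (hγ.mono (Icc_subset_Icc_right ht₂b)).exists_last_mem_of_isClosed hat₂ hW ha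
  exact ⟨t₁, t₂, hat₁, ht₁t₂, ht₂b, hγt₁, hγt₂, fun t ht =>
    ⟨hbefore t ⟨hat₁.trans ht.1.le, ht.2⟩, hafter t (Ioo_subset_Ioc_self ht)⟩⟩

end Crossing

section Length

variable {E : Type*} [NormedAddCommGroup E] [NormedSpace ℝ E] [FiniteDimensional ℝ E]
  {f : ℝ → E} {C : NNReal} {a b : ℝ}

theorem LipschitzOnWith.enorm_sub_le_lintegral_deriv (hf : LipschitzOnWith C f (Icc a b))
    (hab : a ≤ b) : ‖f b - f a‖ₑ ≤ ∫⁻ t in Icc a b, ‖deriv f t‖ₑ := by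
  rw [← uIcc_of_le hab] at hf
  obtain ⟨ℓ, hℓ, hℓf⟩ := exists_dual_vector'' ℝ (f b - f a)
  have hℓAC : AbsolutelyContinuousOnInterval (ℓ ∘ f) a b :=
    (ℓ.lipschitz.comp_lipschitzOnWith hf).absolutelyContinuousOnInterval
  have hderiv : ∀ᵐ t ∂volume.restrict (Ioo a b), ‖deriv (ℓ ∘ f) t‖ₑ ≤ ‖deriv f t‖ₑ := by
    filter_upwards [ae_restrict_of_ae
        hf.absolutelyContinuousOnInterval.boundedVariationOn.ae_differentiableAt_of_mem_uIcc,
      self_mem_ae_restrict measurableSet_Ioo] with t hdiff ht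
    have hft := (hdiff (Icc_subset_uIcc (Ioo_subset_Icc_self ht))).hasDerivAt
    rw [(ℓ.hasFDerivAt.comp_hasDerivAt t hft).deriv, enorm_le_iff_norm_le]
    exact (ℓ.le_of_opNorm_le hℓ _).trans_eq (one_mul _)
  calc ‖f b - f a‖ₑ = ‖∫ t in Ioc a b, deriv (ℓ ∘ f) t‖ₑ := by
        rw [← intervalIntegral.integral_of_le hab, hℓAC.integral_deriv_eq_sub, Function.comp_apply,
          Function.comp_apply, ← map_sub, hℓf, RCLike.ofReal_real_eq_id, id, enorm_norm]
    _ ≤ ∫⁻ t in Ioo a b, ‖deriv (ℓ ∘ f) t‖ₑ := by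
        rw [restrict_Ioc_eq_restrict_Icc, ← restrict_Ioo_eq_restrict_Icc]
        exact enorm_integral_le_lintegral_enorm _
    _ ≤ ∫⁻ t in Icc a b, ‖deriv f t‖ₑ := by
        rw [← restrict_Ioo_eq_restrict_Icc]
        exact lintegral_mono_ae hderiv

theorem LipschitzOnWith.ofReal_mul_norm_sub_le_lintegral {g : E → ℝ} {m : ℝ}
    (hf : LipschitzOnWith C f (Icc a b)) (hab : a ≤ b) (hm : 0 ≤ m)
    (hg : ∀ t ∈ Ioo a b, m ≤ g (f t)) :
    ENNReal.ofReal (m * ‖f b - f a‖) ≤ ∫⁻ t in Icc a b, ENNReal.ofReal (g (f t) * ‖deriv f t‖) :=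
  calc ENNReal.ofReal (m * ‖f b - f a‖) = ENNReal.ofReal m * ‖f b - f a‖ₑ := by
        rw [ENNReal.ofReal_mul hm, ofReal_norm]
    _ ≤ ENNReal.ofReal m * ∫⁻ t in Icc a b, ‖deriv f t‖ₑ := by
        gcongr
        exact hf.enorm_sub_le_lintegral_deriv hab
    _ = ∫⁻ t in Ioo a b, ENNReal.ofReal m * ‖deriv f t‖ₑ := by
        rw [lintegral_const_mul' _ _ ENNReal.ofReal_ne_top, restrict_Ioo_eq_restrict_Icc]
    _ ≤ ∫⁻ t in Ioo a b, ENNReal.ofReal (g (f t) * ‖deriv f t‖) := by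
        refine setLIntegral_mono' measurableSet_Ioo fun t ht => ?_
        rw [← ofReal_norm, ← ENNReal.ofReal_mul hm]
        exact ENNReal.ofReal_le_ofReal (mul_le_mul_of_nonneg_right (hg t ht) (norm_nonneg _))
    _ ≤ ∫⁻ t in Icc a b, ENNReal.ofReal (g (f t) * ‖deriv f t‖) :=
        lintegral_mono_set Ioo_subset_Icc_self

end Length

theorem ofReal_mul_le_agmonDistE {d : ℕ} {Ω W W' : Set (EuclideanSpace ℝ (Fin d))}
    {g : EuclideanSpace ℝ (Fin d) → ℝ} {m α : ℝ} {z y : EuclideanSpace ℝ (Fin d)}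
    (hW : IsClosed W) (hm : 0 ≤ m) (hgm : ∀ x ∈ W' \ W, m ≤ g x)
    (hα : ∀ x ∈ Ω \ W', ∀ w ∈ W, α ≤ dist x w) (hz : z ∈ W) (hy : y ∉ W') :
    ENNReal.ofReal (m * α) ≤ agmonDistE Ω g z y := by
  refine le_sInf ?_
  rintro _ ⟨γ, ⟨C, hγ⟩, hγΩ, rfl, rfl, rfl⟩
  obtain ⟨t₁, t₂, h0t₁, ht₁t₂, ht₂1, hγt₁, hγt₂, hannulus⟩ :=
    hγ.continuousOn.exists_crossing zero_le_one hW hz hy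
  have hexit : γ t₂ ∈ closure (Ω \ W') :=
    closure_mono (sdiff_subset_sdiff_left (image_subset_iff.2 hγΩ)) hγt₂
  have hαγ : α ≤ ‖γ t₂ - γ t₁‖ := by
    rw [← dist_eq_norm]
    refine closure_minimal (fun x hx => hα x hx _ hγt₁) ?_ hexit
    exact isClosed_le continuous_const (continuous_id.dist continuous_const)
  calc ENNReal.ofReal (m * α) ≤ ENNReal.ofReal (m * ‖γ t₂ - γ t₁‖) :=
        ENNReal.ofReal_le_ofReal (mul_le_mul_of_nonneg_left hαγ hm)
    _ ≤ ∫⁻ t in Icc t₁ t₂, ENNReal.ofReal (g (γ t) * ‖deriv γ t‖) :=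
        (hγ.mono (Icc_subset_Icc h0t₁ ht₂1)).ofReal_mul_norm_sub_le_lintegral ht₁t₂ hm
          fun t ht => hgm _ (hannulus t ht)
    _ ≤ ∫⁻ t in Icc 0 1, ENNReal.ofReal (g (γ t) * ‖deriv γ t‖) :=
        lintegral_mono_set (Icc_subset_Icc h0t₁ ht₂1)

theorem agmonDist_lower_bound_annulus_general {d : ℕ}
    (Ω : Set (EuclideanSpace ℝ (Fin d)))
    (g : EuclideanSpace ℝ (Fin d) → ℝ) (hg0 : ∀ x ∈ Ω, 0 ≤ g x)
    (z : EuclideanSpace ℝ (Fin d))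
    (W W' : Set (EuclideanSpace ℝ (Fin d)))
    (hWc : IsClosed W) (hW'c : IsClosed W') (hW'Ω : W' ⊆ Ω)
    (hWnhd : W ∈ 𝓝 z)
    (α : ℝ) (hαdef : α = sInf {r : ℝ | ∃ x ∈ Ω \ W', ∃ y ∈ W, r = dist x y})
    (hα : 0 < α)
    (K : ℝ) (hK : 0 < K)
    (hgK : K / α < sInf (g '' closure (W' \ W))) :
    ∀ B : Set (EuclideanSpace ℝ (Fin d)), B ⊆ Ω → B ∩ W' = ∅ →
      ENNReal.ofReal K < ⨅ y ∈ B, agmonDistE Ω g z y := by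
  intro B _ hBW'
  set m := sInf (g '' closure (W' \ W))
  have hgm : ∀ x ∈ closure (W' \ W), m ≤ g x := fun x hx =>
    csInf_le ⟨0, forall_mem_image.2 fun x hx =>
      hg0 x (hW'Ω (closure_minimal sdiff_subset hW'c hx))⟩ (mem_image_of_mem g hx)
  have hαdist : ∀ x ∈ Ω \ W', ∀ w ∈ W, α ≤ dist x w := fun x hx w hw =>
    hαdef ▸ csInf_le ⟨0, by rintro _ ⟨_, _, _, _, rfl⟩; exact dist_nonneg⟩ ⟨x, hx, w, hw, rfl⟩
  have hKm : K < m * α := (div_lt_iff₀ hα).1 hgK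
  calc ENNReal.ofReal K < ENNReal.ofReal (m * α) :=
        (ENNReal.ofReal_lt_ofReal_iff (hK.trans hKm)).2 hKm
    _ ≤ ⨅ y ∈ B, agmonDistE Ω g z y := le_iInf₂ fun y hy =>
      ofReal_mul_le_agmonDistE hWc ((div_pos hK hα).trans hgK).le
        (fun x hx => hgm x (subset_closure hx)) hαdist (mem_of_mem_nhds hWnhd)
        fun hyW' => (eq_empty_iff_forall_notMem.1 hBW' y) ⟨hy, hyW'⟩

/-- Lower bound for the Agmon distance via a separating annulus:
if `W ⊆ W'` are closed neighborhoods of `z`, `α := inf{|x−y| : x ∈ Ω \ W', y ∈ W} > 0`,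
and `inf_{cl(W' \ W)} g > K/α` for some `K > 0`, then for every `B ⊆ Ω` with
`B ∩ W' = ∅` one has `inf_{y ∈ B} d_a(z,y) > K`. -/
theorem agmonDist_lower_bound_annulus {d : ℕ}
    (Ω : Set (EuclideanSpace ℝ (Fin d)))
    (g : EuclideanSpace ℝ (Fin d) → ℝ) (hg : ContinuousOn g Ω) (hg0 : ∀ x ∈ Ω, 0 ≤ g x)
    (z : EuclideanSpace ℝ (Fin d)) (hz : z ∈ Ω)
    (W W' : Set (EuclideanSpace ℝ (Fin d)))
    (hWc : IsClosed W) (hW'c : IsClosed W') (hWW' : W ⊆ W') (hW'Ω : W' ⊆ Ω)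
    (hWnhd : W ∈ 𝓝 z)
    (α : ℝ) (hαdef : α = sInf {r : ℝ | ∃ x ∈ Ω \ W', ∃ y ∈ W, r = dist x y})
    (hα : 0 < α)
    (K : ℝ) (hK : 0 < K)
    (hgK : K / α < sInf (g '' closure (W' \ W))) :
    ∀ B : Set (EuclideanSpace ℝ (Fin d)), B ⊆ Ω → B ∩ W' = ∅ →
      ENNReal.ofReal K < ⨅ y ∈ B, agmonDistE Ω g z y :=
  agmonDist_lower_bound_annulus_general Ω g hg0 z W W' hWc hW'c hW'Ω hWnhd α hαdef hα K hK hgK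
end

section
/- Agmon distance to a local minimum along the gradient flow: let f be C^1 on an open set Ω ⊆ ℝ^d, x* ∈ Ω a critical point of f, and x a point whose backward gradient flow trajectory γ' = −∇f(γ), γ(0) = x converges to x* as t → ∞ while staying in Ω. Then d_a(x*, x) = f(x) − f(x*), where d_a is the Agmon distance with weight |∇f| (defined as an infimum over Lipschitz curves, allowing curves parametrized on unbounded intervals with convergent endpoints). -/
/-!
The weighted length of every admissible curve `σ` is at least `f(x) - f(x*)`: on `[0, T]` the
curve stays in a compact part of `Ω`, where the `C¹` function `f` is Lipschitz, so `f ∘ σ` is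
absolutely continuous with derivative `⟪∇f(σ), σ'⟫` almost everywhere, whence
`f(σ 0) - f(σ T) ≤ ∫₀ᵀ |∇f(σ)| |σ'|`; let `T → ∞`. The gradient flow attains the bound: along it
`|∇f(γ)| |γ'| = |∇f(γ)|² = -(f ∘ γ)'`, and it is an admissible curve because `|γ'| = |∇f(γ)|` is
continuous and converges at infinity, hence bounded.
-/

open MeasureTheory Filter Topology
open scoped ENNReal

/-- The (generalized) Agmon distance from `x` to a point `x*`, with weight `|∇f|`,
defined as the infimum of weighted lengths of Lipschitz curves parametrized on the
unbounded interval `[0,∞)`, starting from `x`, staying in `Ω` and converging to `x*`.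
(This class contains in particular every Lipschitz curve `[0,1] → Ω` from `x` to `x*`,
extended as a constant after time `1`.) -/
noncomputable def agmonDistGen {d : ℕ} (Ω : Set (EuclideanSpace ℝ (Fin d)))
    (f : EuclideanSpace ℝ (Fin d) → ℝ) (xstar x : EuclideanSpace ℝ (Fin d)) : ℝ≥0∞ :=
  sInf {L : ℝ≥0∞ | ∃ γ : ℝ → EuclideanSpace ℝ (Fin d),
    (∃ C : NNReal, LipschitzOnWith C γ (Set.Ici (0:ℝ))) ∧
    (∀ t : ℝ, 0 ≤ t → γ t ∈ Ω) ∧ γ 0 = x ∧ Tendsto γ atTop (𝓝 xstar) ∧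
    L = ∫⁻ t in Set.Ioi (0:ℝ), ENNReal.ofReal (‖gradient f (γ t)‖ * ‖deriv γ t‖)}

open Set Bornology
open scoped NNReal RealInnerProductSpace

theorem ContDiffOn.locallyLipschitzOn_of_isOpen {E F : Type*} [NormedAddCommGroup E]
    [NormedSpace ℝ E] [NormedAddCommGroup F] [NormedSpace ℝ F] {f : E → F} {Ω : Set E}
    (hf : ContDiffOn ℝ 1 f Ω) (hΩ : IsOpen Ω) : LocallyLipschitzOn Ω f := by
  intro x hx
  obtain ⟨K, t, ht, hK⟩ := (hf.contDiffAt (hΩ.mem_nhds hx)).exists_lipschitzOnWith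
  exact ⟨K, t, nhdsWithin_le_nhds ht, hK⟩

theorem LocallyLipschitzOn.exists_lipschitzOnWith_comp {α β γ : Type*} [PseudoMetricSpace α]
    [PseudoMetricSpace β] [PseudoMetricSpace γ] {f : β → γ} {g : α → β} {s : Set α} {t : Set β}
    {K : ℝ≥0} (hf : LocallyLipschitzOn t f) (hs : IsCompact s) (hg : LipschitzOnWith K g s)
    (hst : MapsTo g s t) : ∃ K', LipschitzOnWith K' (f ∘ g) s := by
  obtain ⟨Kf, hKf⟩ := (hf.mono (image_subset_iff.2 hst)).exists_lipschitzOnWith_of_compact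
    (hs.image_of_continuousOn hg.continuousOn)
  exact ⟨Kf * K, hKf.comp hg (mapsTo_image g s)⟩

theorem ContinuousOn.isBounded_image_Ici_of_tendsto {α : Type*} [PseudoMetricSpace α]
    {g : ℝ → α} {a : ℝ} {l : α} (hg : ContinuousOn g (Ici a)) (hlim : Tendsto g atTop (𝓝 l)) :
    IsBounded (g '' Ici a) := by
  obtain ⟨s, hs, hbdd⟩ := Metric.exists_isBounded_image_of_tendsto hlim
  obtain ⟨T, hT⟩ := mem_atTop_sets.1 hs
  have hcover : Ici a ⊆ Icc a T ∪ s := fun t ht ↦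
    (le_total t T).elim (fun h ↦ .inl ⟨ht, h⟩) (fun h ↦ .inr (hT t h))
  refine (IsBounded.union ?_ hbdd).subset ((image_mono hcover).trans (image_union g _ _).le)
  exact (isCompact_Icc.image_of_continuousOn (hg.mono Icc_subset_Ici_self)).isBounded

theorem AbsolutelyContinuousOnInterval.enorm_sub_le_lintegral_enorm_deriv {u : ℝ → ℝ} {a b : ℝ}
    (hu : AbsolutelyContinuousOnInterval u a b) (hab : a ≤ b) :
    ‖u b - u a‖ₑ ≤ ∫⁻ t in Ioc a b, ‖deriv u t‖ₑ := by
  rw [← hu.integral_deriv_eq_sub, intervalIntegral.integral_of_le hab]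
  exact enorm_integral_le_lintegral_enorm _

section Gradient

variable {E : Type*} [NormedAddCommGroup E] [InnerProductSpace ℝ E] [CompleteSpace E]
  {f : E → ℝ} {Ω : Set E}

theorem ContDiffOn.continuousOn_gradient (hf : ContDiffOn ℝ 1 f Ω) (hΩ : IsOpen Ω) :
    ContinuousOn (gradient f) Ω :=
  (InnerProductSpace.toDual ℝ E).symm.continuous.comp_continuousOn
    (hf.continuousOn_fderiv_of_isOpen hΩ le_rfl)

theorem hasDerivAt_comp_inner_gradient {σ : ℝ → E} {v : E} {t : ℝ}
    (hf : DifferentiableAt ℝ f (σ t)) (hσ : HasDerivAt σ v t) :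
    HasDerivAt (fun s ↦ f (σ s)) ⟪gradient f (σ t), v⟫ t := by
  rw [inner_gradient_left]
  exact hf.hasFDerivAt.comp_hasDerivAt t hσ

end Gradient

section LowerBound

variable {E : Type*} [NormedAddCommGroup E] [InnerProductSpace ℝ E] [FiniteDimensional ℝ E]
  {f : E → ℝ} {Ω : Set E} {σ : ℝ → E} {C : ℝ≥0}

theorem enorm_sub_le_lintegral_norm_gradient_mul_norm_deriv (hΩ : IsOpen Ω)
    (hf : ContDiffOn ℝ 1 f Ω) {a b : ℝ} (hab : a ≤ b) (hσ : LipschitzOnWith C σ (Icc a b))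
    (hσΩ : MapsTo σ (Icc a b) Ω) :
    ‖f (σ b) - f (σ a)‖ₑ ≤ ∫⁻ t in Ioc a b, ENNReal.ofReal (‖gradient f (σ t)‖ * ‖deriv σ t‖) := by
  rw [← uIcc_of_le hab] at hσ hσΩ
  obtain ⟨K, hK⟩ :=
    (hf.locallyLipschitzOn_of_isOpen hΩ).exists_lipschitzOnWith_comp isCompact_uIcc hσ hσΩ
  refine (hK.absolutelyContinuousOnInterval.enorm_sub_le_lintegral_enorm_deriv hab).trans
    (lintegral_mono_ae ?_)
  filter_upwards [ae_restrict_mem measurableSet_Ioc, ae_restrict_of_ae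
    hσ.absolutelyContinuousOnInterval.boundedVariationOn.ae_differentiableAt_of_mem_uIcc]
    with t ht hσt
  have htab : t ∈ uIcc a b := uIoc_subset_uIcc (by rwa [uIoc_of_le hab])
  have hft : DifferentiableAt ℝ f (σ t) :=
    (hf.differentiableOn one_ne_zero).differentiableAt (hΩ.mem_nhds (hσΩ htab))
  rw [Function.comp_def, (hasDerivAt_comp_inner_gradient hft (hσt htab).hasDerivAt).deriv,
    ← ofReal_norm]
  exact ENNReal.ofReal_le_ofReal (abs_real_inner_le_norm _ _)

theorem ofReal_sub_le_lintegral_norm_gradient_mul_norm_deriv_of_tendsto (hΩ : IsOpen Ω)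
    (hf : ContDiffOn ℝ 1 f Ω) {a : ℝ} (hσ : LipschitzOnWith C σ (Ici a))
    (hσΩ : MapsTo σ (Ici a) Ω) {y : E} (hy : y ∈ Ω) (hσlim : Tendsto σ atTop (𝓝 y)) :
    ENNReal.ofReal (f (σ a) - f y) ≤
      ∫⁻ t in Ioi a, ENNReal.ofReal (‖gradient f (σ t)‖ * ‖deriv σ t‖) := by
  have hlim : Tendsto (fun T ↦ ENNReal.ofReal (f (σ a) - f (σ T))) atTop
      (𝓝 (ENNReal.ofReal (f (σ a) - f y))) :=
    ENNReal.tendsto_ofReal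
      (((hf.continuousOn.continuousAt (hΩ.mem_nhds hy)).tendsto.comp hσlim).const_sub _)
  refine le_of_tendsto hlim (eventually_atTop.2 ⟨a, fun T hT ↦ ?_⟩)
  calc ENNReal.ofReal (f (σ a) - f (σ T))
      ≤ ‖f (σ T) - f (σ a)‖ₑ := by rw [enorm_sub_rev]; exact Real.ofReal_le_enorm _
    _ ≤ ∫⁻ t in Ioc a T, ENNReal.ofReal (‖gradient f (σ t)‖ * ‖deriv σ t‖) :=
      enorm_sub_le_lintegral_norm_gradient_mul_norm_deriv hΩ hf hT
        (hσ.mono Icc_subset_Ici_self) (hσΩ.mono_left Icc_subset_Ici_self)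
    _ ≤ _ := lintegral_mono_set Ioc_subset_Ioi_self

end LowerBound

section GradientFlow

variable {E : Type*} [NormedAddCommGroup E] [InnerProductSpace ℝ E] [CompleteSpace E]
  {f : E → ℝ} {Ω : Set E} {γ : ℝ → E} {y : E}

theorem exists_lipschitzOnWith_of_gradient_flow (hΩ : IsOpen Ω) (hf : ContDiffOn ℝ 1 f Ω)
    (hy : y ∈ Ω) (hγΩ : MapsTo γ (Ici 0) Ω)
    (hγflow : ∀ t ∈ Ici (0 : ℝ), HasDerivAt γ (-gradient f (γ t)) t)
    (hγlim : Tendsto γ atTop (𝓝 y)) : ∃ C, LipschitzOnWith C γ (Ici 0) := by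
  have hgrad := hf.continuousOn_gradient hΩ
  have hγ : ContinuousOn γ (Ici 0) := fun t ht ↦ (hγflow t ht).continuousAt.continuousWithinAt
  obtain ⟨C, hC⟩ := isBounded_iff_forall_norm_le.1
    ((hgrad.comp hγ hγΩ).isBounded_image_Ici_of_tendsto
      ((hgrad.continuousAt (hΩ.mem_nhds hy)).tendsto.comp hγlim))
  refine ⟨C.toNNReal, (convex_Ici 0).lipschitzOnWith_of_nnnorm_hasDerivWithin_le
    (fun t ht ↦ (hγflow t ht).hasDerivWithinAt) fun t ht ↦ ?_⟩
  rw [← NNReal.coe_le_coe, coe_nnnorm, norm_neg]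
  exact (hC _ (mem_image_of_mem _ ht)).trans (le_max_left _ _)

theorem lintegral_norm_gradient_mul_norm_deriv_of_gradient_flow (hΩ : IsOpen Ω)
    (hf : DifferentiableOn ℝ f Ω) (hy : y ∈ Ω) (hγΩ : MapsTo γ (Ici 0) Ω)
    (hγflow : ∀ t ∈ Ici (0 : ℝ), HasDerivAt γ (-gradient f (γ t)) t)
    (hγlim : Tendsto γ atTop (𝓝 y)) :
    ∫⁻ t in Ioi 0, ENNReal.ofReal (‖gradient f (γ t)‖ * ‖deriv γ t‖) =
      ENNReal.ofReal (f (γ 0) - f y) := by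
  have hdecay : ∀ t ∈ Ici (0 : ℝ),
      HasDerivAt (fun s ↦ -f (γ s)) (‖gradient f (γ t)‖ ^ 2) t := by
    intro t ht
    have hft := (hf (γ t) (hγΩ ht)).differentiableAt (hΩ.mem_nhds (hγΩ ht))
    simpa [real_inner_self_eq_norm_sq] using
      (hasDerivAt_comp_inner_gradient hft (hγflow t ht)).fun_neg
  have hlim : Tendsto (fun s ↦ -f (γ s)) atTop (𝓝 (-f y)) :=
    ((hf.continuousOn.continuousAt (hΩ.mem_nhds hy)).tendsto.comp hγlim).neg
  have hnonneg : ∀ t ∈ Ioi (0 : ℝ), 0 ≤ ‖gradient f (γ t)‖ ^ 2 := fun t _ ↦ sq_nonneg _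
  rw [setLIntegral_congr_fun measurableSet_Ioi fun t ht ↦ by
      rw [(hγflow t (Ioi_subset_Ici_self ht)).deriv, norm_neg, ← sq],
    ← ofReal_integral_eq_lintegral_ofReal (integrableOn_Ioi_deriv_of_nonneg' hdecay hnonneg hlim)
      (ae_restrict_of_forall_mem measurableSet_Ioi hnonneg),
    integral_Ioi_of_hasDerivAt_of_nonneg' hdecay hnonneg hlim, neg_sub_neg]

end GradientFlow

theorem ofReal_sub_le_agmonDistGen {d : ℕ} {Ω : Set (EuclideanSpace ℝ (Fin d))} (hΩ : IsOpen Ω)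
    {f : EuclideanSpace ℝ (Fin d) → ℝ} (hf : ContDiffOn ℝ 1 f Ω)
    {xstar : EuclideanSpace ℝ (Fin d)} (hxstar : xstar ∈ Ω) (x : EuclideanSpace ℝ (Fin d)) :
    ENNReal.ofReal (f x - f xstar) ≤ agmonDistGen Ω f xstar x := by
  refine le_sInf ?_
  rintro _ ⟨σ, ⟨C, hσ⟩, hσΩ, rfl, hσlim, rfl⟩
  exact ofReal_sub_le_lintegral_norm_gradient_mul_norm_deriv_of_tendsto hΩ hf hσ hσΩ hxstar hσlim

theorem agmonDistGen_eq_of_gradient_flow_general {d : ℕ}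
    (Ω : Set (EuclideanSpace ℝ (Fin d))) (hΩ : IsOpen Ω)
    (f : EuclideanSpace ℝ (Fin d) → ℝ) (hf : ContDiffOn ℝ 1 f Ω)
    (xstar x : EuclideanSpace ℝ (Fin d)) (hxstar : xstar ∈ Ω)
    (γ : ℝ → EuclideanSpace ℝ (Fin d)) (hγ0 : γ 0 = x)
    (hγΩ : ∀ t : ℝ, 0 ≤ t → γ t ∈ Ω)
    (hγflow : ∀ t : ℝ, 0 ≤ t → HasDerivAt γ (-gradient f (γ t)) t)
    (hγlim : Tendsto γ atTop (𝓝 xstar)) :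
    agmonDistGen Ω f xstar x = ENNReal.ofReal (f x - f xstar) := by
  obtain ⟨C, hγ⟩ := exists_lipschitzOnWith_of_gradient_flow hΩ hf hxstar hγΩ hγflow hγlim
  have hlength := lintegral_norm_gradient_mul_norm_deriv_of_gradient_flow hΩ
    (hf.differentiableOn one_ne_zero) hxstar hγΩ hγflow hγlim
  rw [hγ0] at hlength
  exact le_antisymm (sInf_le ⟨γ, ⟨C, hγ⟩, hγΩ, hγ0, hγlim, hlength.symm⟩)
    (ofReal_sub_le_agmonDistGen hΩ hf hxstar x)

/-- Agmon distance to a critical point along the gradient flow: if the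
backward gradient flow trajectory `γ' = −∇f(γ)`, `γ(0) = x` stays in `Ω` and converges to
the critical point `x*` of `f`, then `d_a(x*, x) = f(x) − f(x*)`. -/
theorem agmonDistGen_eq_of_gradient_flow {d : ℕ}
    (Ω : Set (EuclideanSpace ℝ (Fin d))) (hΩ : IsOpen Ω)
    (f : EuclideanSpace ℝ (Fin d) → ℝ) (hf : ContDiffOn ℝ 1 f Ω)
    (xstar x : EuclideanSpace ℝ (Fin d)) (hxstar : xstar ∈ Ω)
    (hcrit : gradient f xstar = 0)
    (γ : ℝ → EuclideanSpace ℝ (Fin d)) (hγ0 : γ 0 = x)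
    (hγΩ : ∀ t : ℝ, 0 ≤ t → γ t ∈ Ω)
    (hγflow : ∀ t : ℝ, 0 ≤ t → HasDerivAt γ (-gradient f (γ t)) t)
    (hγlim : Tendsto γ atTop (𝓝 xstar)) :
    agmonDistGen Ω f xstar x = ENNReal.ofReal (f x - f xstar) :=
  agmonDistGen_eq_of_gradient_flow_general Ω hΩ f hf xstar x hxstar γ hγ0 hγΩ hγflow hγlim
end

section
/- One-dimensional Laplace asymptotics for exit probability: let f : ℝ → ℝ be smooth, z₁ < z₂ with f'(z₁) < 0, f'(z₂) > 0, f(z₁) < f(z₂), and suppose f has a unique critical point x₀ in (z₁, z₂). Let w_h(x) = (∫_{z₁}^x e^{2f/h})/(∫_{z₁}^{z₂} e^{2f/h}). Then for any fixed x ∈ (z₁, z₂) with f(x) < f(z₁), as h → 0, w_h(x) = −(f'(z₂)/f'(z₁)) e^{−(2/h)(f(z₂)−f(z₁))} (1 + O(h)). -/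
open MeasureTheory Set Real

/-!
After factoring out `e^{2 f(z₁)/h}` and `e^{2 f(z₂)/h}`, numerator and denominator are Laplace
integrals `∫ e^{(g - g(e))/h}` whose exponent is negative except at an endpoint `e` with
`g'(e) ≠ 0`: since the unique critical point separates a strictly decreasing from a strictly
increasing part of `f`, `f < f z₁` on `(z₁, x]` and `f < f z₂` on `[z₁, z₂)`. Near such an endpoint,
integration by parts against `h / g'` gives `h / |g'(e)|` plus an exponentially small boundary term
and a remainder `h ∫ (g''/g'²) e^{(g - g(e))/h} = O(h²)`; the rest of the interval contributes
`O(e^{-γ/h})`. The quotient of the two expansions `h/mᵢ + O(h²)` is `m₂/m₁ · (1 + O(h))`.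
-/

lemma exp_div_le_factorial_mul_pow {x γ h : ℝ} (n : ℕ) (hγ : 0 < γ) (hh : 0 < h)
    (hx : x ≤ -γ) : exp (x / h) ≤ n.factorial * (h / γ) ^ n := by
  have key := pow_div_factorial_le_exp (γ / h) (div_pos hγ hh).le n
  calc exp (x / h) ≤ exp (-(γ / h)) := exp_le_exp.2 <| by
        rw [← neg_div]
        exact div_le_div_of_nonneg_right hx hh.le
    _ ≤ n.factorial * (h / γ) ^ n := by
        rw [exp_neg, inv_le_comm₀ (exp_pos _) (by positivity)]
        calc (n.factorial * (h / γ) ^ n)⁻¹ = (γ / h) ^ n / n.factorial := by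
              rw [mul_inv, ← inv_pow, inv_div]; ring
          _ ≤ exp (γ / h) := key

lemma integral_exp_div_le_of_deriv_le {g : ℝ → ℝ} {a c μ h : ℝ} (hac : a ≤ c) (hμ : 0 < μ)
    (hh : 0 < h) (hg : Differentiable ℝ g) (hg' : ∀ t ∈ Icc a c, deriv g t ≤ -μ) :
    ∫ t in a..c, exp (g t / h) ≤ h / μ * exp (g a / h) := by
  have hgc := hg.continuous
  have hderiv : ∀ t, HasDerivAt (fun s => -(h / μ) * exp (g s / h))
      (-(deriv g t / μ) * exp (g t / h)) t := by
    intro t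
    refine ((((hg t).hasDerivAt.div_const h).exp).const_mul (-(h / μ))).congr_deriv ?_
    field_simp
  calc ∫ t in a..c, exp (g t / h)
      ≤ -(h / μ) * exp (g c / h) - -(h / μ) * exp (g a / h) :=
        intervalIntegral.integral_le_sub_of_hasDeriv_right_of_le hac (by fun_prop)
          (fun t _ => (hderiv t).hasDerivWithinAt)
          ((by fun_prop : Continuous fun t => exp (g t / h)).integrableOn_Icc)
          (fun t ht => le_mul_of_one_le_left (exp_pos _).le <| by
            rw [le_neg, div_le_iff₀ hμ]
            linarith [hg' t (Ioo_subset_Icc_self ht)])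
    _ ≤ h / μ * exp (g a / h) := by
        have : 0 ≤ h / μ * exp (g c / h) := by positivity
        linarith

lemma ContDiff.continuous_deriv_deriv {g : ℝ → ℝ} (hg : ContDiff ℝ 2 g) :
    Continuous (deriv (deriv g)) :=
  ((contDiff_succ_iff_deriv (n := 1)).mp hg).2.2.continuous_deriv le_rfl

lemma integral_exp_div_eq_of_deriv_ne_zero {g : ℝ → ℝ} {a c h : ℝ} (hg : ContDiff ℝ 2 g)
    (hh : h ≠ 0) (hne : ∀ t ∈ uIcc a c, deriv g t ≠ 0) :
    ∫ t in a..c, exp (g t / h) =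
      h * (exp (g c / h) / deriv g c - exp (g a / h) / deriv g a) +
        h * ∫ t in a..c, deriv (deriv g) t / deriv g t ^ 2 * exp (g t / h) := by
  have hg₁ := hg.differentiable two_ne_zero
  have hg₂ := hg.differentiable_deriv_two
  have hgc := hg₁.continuous
  have hg'c := hg.continuous_deriv one_le_two
  have hg''c := hg.continuous_deriv_deriv
  have hderiv : ∀ t ∈ uIcc a c, HasDerivAt (fun s => h * (exp (g s / h) / deriv g s))
      (exp (g t / h) - h * (deriv (deriv g) t / deriv g t ^ 2 * exp (g t / h))) t := by
    intro t ht
    refine (((((hg₁ t).hasDerivAt.div_const h).exp).div (hg₂ t).hasDerivAt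
      (hne t ht)).const_mul h).congr_deriv ?_
    have hgt := hne t ht
    field_simp
  have hcont : ContinuousOn (fun t => deriv (deriv g) t / deriv g t ^ 2 * exp (g t / h))
      (uIcc a c) :=
    (hg''c.continuousOn.div (by fun_prop) fun t ht => pow_ne_zero 2 (hne t ht)).mul
      (by fun_prop)
  have hexp := (by fun_prop : Continuous fun t => exp (g t / h)).intervalIntegrable (μ := volume) a c
  have hrem := (hcont.intervalIntegrable (μ := volume)).const_mul h
  have hftc := intervalIntegral.integral_eq_sub_of_hasDerivAt hderiv (hexp.sub hrem)
  rw [intervalIntegral.integral_sub hexp hrem,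
    intervalIntegral.integral_const_mul] at hftc
  linear_combination hftc

lemma abs_integral_exp_div_add_le_of_deriv_le {g : ℝ → ℝ} {a c μ K h : ℝ}
    (hg : ContDiff ℝ 2 g) (hac : a ≤ c) (hμ : 0 < μ) (hh : 0 < h)
    (hg' : ∀ t ∈ Icc a c, deriv g t ≤ -μ)
    (hK : ∀ t ∈ Icc a c, |deriv (deriv g) t / deriv g t ^ 2| ≤ K) :
    |(∫ t in a..c, exp (g t / h)) + h * exp (g a / h) / deriv g a|
      ≤ h / μ * exp (g c / h) + K / μ * h ^ 2 * exp (g a / h) := by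
  have hK₀ : 0 ≤ K := (abs_nonneg _).trans (hK a (left_mem_Icc.2 hac))
  have hdc : μ ≤ |deriv g c| := by
    rw [abs_of_neg (by linarith [hg' c (right_mem_Icc.2 hac)])]
    linarith [hg' c (right_mem_Icc.2 hac)]
  have hgc := hg.continuous
  have hcont : Continuous fun t => exp (g t / h) := by fun_prop
  have hnorm : ‖∫ t in a..c, deriv (deriv g) t / deriv g t ^ 2 * exp (g t / h)‖
      ≤ ∫ t in a..c, K * exp (g t / h) :=
    intervalIntegral.norm_integral_le_of_norm_le hac
      (ae_of_all _ fun t ht => by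
        rw [norm_mul, Real.norm_of_nonneg (exp_pos _).le, Real.norm_eq_abs]
        exact mul_le_mul_of_nonneg_right (hK t (Ioc_subset_Icc_self ht)) (exp_pos _).le)
      ((hcont.intervalIntegrable _ _).const_mul K)
  rw [intervalIntegral.integral_const_mul, Real.norm_eq_abs] at hnorm
  have hbulk := integral_exp_div_le_of_deriv_le hac hμ hh (hg.differentiable two_ne_zero) hg'
  rw [integral_exp_div_eq_of_deriv_ne_zero hg hh.ne' fun t ht =>
    ((hg' t (uIcc_of_le hac ▸ ht)).trans_lt (neg_neg_of_pos hμ)).ne]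
  set R := ∫ t in a..c, deriv (deriv g) t / deriv g t ^ 2 * exp (g t / h)
  calc |h * (exp (g c / h) / deriv g c - exp (g a / h) / deriv g a) + h * R
        + h * exp (g a / h) / deriv g a|
      = |h * exp (g c / h) / deriv g c + h * R| := by congr 1; ring
    _ ≤ |h * exp (g c / h) / deriv g c| + |h * R| := abs_add_le _ _
    _ = h * exp (g c / h) / |deriv g c| + h * |R| := by
        rw [abs_div, abs_mul, abs_mul, abs_of_pos hh, abs_of_pos (exp_pos _)]
    _ ≤ h * exp (g c / h) / μ + h * (K * (h / μ * exp (g a / h))) := by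
        gcongr
        exact hnorm.trans (mul_le_mul_of_nonneg_left hbulk hK₀)
    _ = h / μ * exp (g c / h) + K / μ * h ^ 2 * exp (g a / h) := by ring

lemma exists_forall_Icc_le_of_continuousAt {u : ℝ → ℝ} {a b L : ℝ} (hu : ContinuousAt u a)
    (hua : u a < L) (hab : a < b) : ∃ c, a < c ∧ c ≤ b ∧ ∀ t ∈ Icc a c, u t ≤ L := by
  obtain ⟨d, had, hd⟩ := mem_nhdsGE_iff_exists_Icc_subset.1 <| mem_nhdsWithin_of_mem_nhds <|
    hu.eventually (gt_mem_nhds hua)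
  exact ⟨min b d, lt_min hab had, min_le_left _ _,
    fun t ht => (hd ⟨ht.1, ht.2.trans (min_le_right _ _)⟩).le⟩

lemma IsCompact.exists_pos_forall_le_neg {X : Type*} [TopologicalSpace X] {s : Set X}
    (hs : IsCompact s) (hne : s.Nonempty) {u : X → ℝ} (hu : ContinuousOn u s)
    (hneg : ∀ x ∈ s, u x < 0) : ∃ γ > 0, ∀ x ∈ s, u x ≤ -γ := by
  obtain ⟨x₀, hx₀, hmax⟩ := hs.exists_isMaxOn hne hu
  exact ⟨-u x₀, neg_pos.2 (hneg x₀ hx₀), fun x hx => (neg_neg (u x₀)).symm ▸ hmax hx⟩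

lemma abs_integral_exp_div_le_of_le_neg {g : ℝ → ℝ} {c b γ h : ℝ} (hg : Continuous g)
    (hcb : c ≤ b) (hγ : 0 < γ) (hh : 0 < h) (hle : ∀ t ∈ Icc c b, g t ≤ -γ) :
    |∫ t in c..b, exp (g t / h)| ≤ 2 * (b - c) / γ ^ 2 * h ^ 2 := by
  rw [abs_of_nonneg (intervalIntegral.integral_nonneg hcb fun t _ => (exp_pos _).le)]
  calc ∫ t in c..b, exp (g t / h) ≤ ∫ t in c..b, (2 : ℕ).factorial * (h / γ) ^ 2 :=
        intervalIntegral.integral_mono_on hcb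
          ((by fun_prop : Continuous fun t => exp (g t / h)).intervalIntegrable _ _)
          intervalIntegrable_const fun t ht => exp_div_le_factorial_mul_pow 2 hγ hh (hle t ht)
    _ = 2 * (b - c) / γ ^ 2 * h ^ 2 := by
        rw [intervalIntegral.integral_const, smul_eq_mul, Nat.factorial_two, Nat.cast_ofNat]
        ring

theorem laplace_left_endpoint {g : ℝ → ℝ} {a b : ℝ} (hg : ContDiff ℝ 2 g) (hab : a < b)
    (hlt : ∀ t ∈ Ioc a b, g t < g a) (hda : deriv g a < 0) :
    ∃ K > 0, ∀ h > 0, |(∫ t in a..b, exp ((g t - g a) / h)) - h / -deriv g a| ≤ K * h ^ 2 := by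
  set φ : ℝ → ℝ := fun t => g t - g a
  have hφ : ContDiff ℝ 2 φ := hg.sub contDiff_const
  have hdφ : deriv φ = deriv g := deriv_sub_const_fun _
  obtain ⟨m, hm, hga⟩ : ∃ m > 0, deriv g a = -m := ⟨-deriv g a, neg_pos.2 hda, (neg_neg _).symm⟩
  obtain ⟨c, hac, hcb, hdc⟩ := exists_forall_Icc_le_of_continuousAt
    (hg.continuous_deriv one_le_two).continuousAt (show deriv g a < -(m / 2) by linarith) hab
  have hr : ContinuousOn (fun t => deriv (deriv g) t / deriv g t ^ 2) (Icc a c) :=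
    hg.continuous_deriv_deriv.continuousOn.div
      ((hg.continuous_deriv one_le_two).continuousOn.pow 2)
      (fun t ht => pow_ne_zero 2 (by linarith [hdc t ht]))
  obtain ⟨K, hK⟩ := isCompact_Icc.exists_bound_of_continuousOn hr
  obtain ⟨γ, hγ, hφγ⟩ := isCompact_Icc.exists_pos_forall_le_neg (nonempty_Icc.2 hcb)
    hφ.continuous.continuousOn fun t ht => sub_neg.2 (hlt t ⟨hac.trans_le ht.1, ht.2⟩)
  have hK₀ : 0 ≤ K := (norm_nonneg _).trans (hK a (left_mem_Icc.2 hac.le))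
  refine ⟨2 / (m * γ) + 2 * K / m + 2 * (b - c) / γ ^ 2,
    add_pos_of_pos_of_nonneg (add_pos_of_pos_of_nonneg (by positivity) (by positivity))
      (div_nonneg (by linarith) (by positivity)), fun h hh => ?_⟩
  change |(∫ t in a..b, exp (φ t / h)) - h / -deriv g a| ≤ _
  have hcont : Continuous fun t => exp (φ t / h) := by fun_prop
  have hlayer := abs_integral_exp_div_add_le_of_deriv_le hφ hac.le (half_pos hm) hh
    (by rwa [hdφ]) (by simpa only [hdφ, ← Real.norm_eq_abs] using hK)
  have hφa : φ a = 0 := sub_self _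
  simp only [hdφ, hφa, zero_div, exp_zero, mul_one] at hlayer
  have hφc := exp_div_le_factorial_mul_pow 1 hγ hh (hφγ c (left_mem_Icc.2 hcb))
  have htail := abs_integral_exp_div_le_of_le_neg hφ.continuous hcb hγ hh hφγ
  rw [← intervalIntegral.integral_add_adjacent_intervals
    (hcont.intervalIntegrable (μ := volume) a c) (hcont.intervalIntegrable c b)]
  calc |(∫ t in a..c, exp (φ t / h)) + (∫ t in c..b, exp (φ t / h)) - h / -deriv g a|
      = |((∫ t in a..c, exp (φ t / h)) + h / deriv g a) + ∫ t in c..b, exp (φ t / h)| := by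
        congr 1
        ring
    _ ≤ h / (m / 2) * exp (φ c / h) + K / (m / 2) * h ^ 2 + 2 * (b - c) / γ ^ 2 * h ^ 2 :=
        (abs_add_le _ _).trans (add_le_add hlayer htail)
    _ ≤ h / (m / 2) * (h / γ) + K / (m / 2) * h ^ 2 + 2 * (b - c) / γ ^ 2 * h ^ 2 := by
        gcongr
        simpa using hφc
    _ = _ := by field_simp

theorem laplace_right_endpoint {g : ℝ → ℝ} {a b : ℝ} (hg : ContDiff ℝ 2 g) (hab : a < b)
    (hlt : ∀ t ∈ Ico a b, g t < g b) (hdb : 0 < deriv g b) :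
    ∃ K > 0, ∀ h > 0, |(∫ t in a..b, exp ((g t - g b) / h)) - h / deriv g b| ≤ K * h ^ 2 := by
  have hdG : deriv (fun t => g (a + b - t)) a = -deriv g b := by
    rw [deriv_comp_const_sub, add_sub_cancel_left]
  have hG : ContDiff ℝ 2 fun t => g (a + b - t) := hg.comp (contDiff_const.sub contDiff_id)
  obtain ⟨K, hK₀, hK⟩ := laplace_left_endpoint hG hab
    (fun t ht => (hlt _ ⟨by linarith [ht.2], by linarith [ht.1]⟩).trans_eq
      (by rw [add_sub_cancel_left]))
    (by rw [hdG]; linarith)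
  refine ⟨K, hK₀, fun h hh => ?_⟩
  have hrefl := intervalIntegral.integral_comp_sub_left (fun s => exp ((g s - g b) / h)) (a + b)
    (a := a) (b := b)
  rw [add_sub_cancel_left, add_sub_cancel_right] at hrefl
  simpa only [add_sub_cancel_left, hdG, neg_neg, hrefl] using hK h hh

theorem IsPreconnected.lt_zero_of_ne_zero {X α : Type*} [TopologicalSpace X] [LinearOrder α]
    [TopologicalSpace α] [OrderClosedTopology α] [Zero α] {s : Set X} (hs : IsPreconnected s)
    {g : X → α} (hg : ContinuousOn g s) (hne : ∀ t ∈ s, g t ≠ 0) {p t : X} (hp : p ∈ s)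
    (hgp : g p < 0) (ht : t ∈ s) : g t < 0 := by
  by_contra! hgt
  obtain ⟨u, hu, hu0⟩ := hs.intermediate_value hp ht hg ⟨hgp.le, hgt⟩
  exact hne u hu hu0

theorem strictAntiOn_and_strictMonoOn_of_deriv_ne_zero {f : ℝ → ℝ} {a b x₀ : ℝ}
    (hf : ContDiff ℝ 1 f) (ha : deriv f a < 0) (hb : 0 < deriv f b) (hx₀ : x₀ ∈ Ioo a b)
    (hcrit : ∀ t ∈ Ioo a b, t ≠ x₀ → deriv f t ≠ 0) :
    StrictAntiOn f (Icc a x₀) ∧ StrictMonoOn f (Icc x₀ b) := by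
  have hcont := hf.continuous_deriv le_rfl
  have hne₁ : ∀ t ∈ Ico a x₀, deriv f t ≠ 0 := fun t ht => by
    rcases ht.1.eq_or_lt with rfl | hat
    · exact ha.ne
    · exact hcrit t ⟨hat, ht.2.trans hx₀.2⟩ ht.2.ne
  have hne₂ : ∀ t ∈ Ioc x₀ b, -deriv f t ≠ 0 := fun t ht => by
    rcases ht.2.eq_or_lt with rfl | htb
    · exact neg_ne_zero.2 hb.ne'
    · exact neg_ne_zero.2 (hcrit t ⟨hx₀.1.trans ht.1, htb⟩ ht.1.ne')
  constructor
  · refine strictAntiOn_of_deriv_neg (convex_Icc a x₀) hf.continuous.continuousOn fun t ht => ?_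
    rw [interior_Icc] at ht
    exact isPreconnected_Ico.lt_zero_of_ne_zero hcont.continuousOn hne₁ (left_mem_Ico.2 hx₀.1) ha
      (Ioo_subset_Ico_self ht)
  · refine strictMonoOn_of_deriv_pos (convex_Icc x₀ b) hf.continuous.continuousOn fun t ht => ?_
    rw [interior_Icc] at ht
    exact neg_neg_iff_pos.1 <| isPreconnected_Ioc.lt_zero_of_ne_zero hcont.neg.continuousOn hne₂
      (right_mem_Ioc.2 hx₀.2) (neg_neg_iff_pos.2 hb) (Ioo_subset_Ioc_self ht)

section Valley

variable {α β : Type*} [LinearOrder α] [LinearOrder β] {f : α → β} {a b x₀ p q t : α}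

theorem apply_lt_left_of_mem_Ioc (hanti : StrictAntiOn f (Icc a x₀))
    (hmono : StrictMonoOn f (Icc x₀ b)) (hp : a ≤ p) (hq : q ≤ b) (hqp : f q < f p)
    (ht : t ∈ Ioc p q) : f t < f p := by
  rcases le_or_gt t x₀ with htx | hxt
  · exact hanti ⟨hp, ht.1.le.trans htx⟩ ⟨hp.trans ht.1.le, htx⟩ ht.1
  · exact (hmono.monotoneOn ⟨hxt.le, ht.2.trans hq⟩ ⟨hxt.le.trans ht.2, hq⟩ ht.2).trans_lt hqp

theorem apply_lt_right_of_mem_Ico (hanti : StrictAntiOn f (Icc a x₀))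
    (hmono : StrictMonoOn f (Icc x₀ b)) (hp : a ≤ p) (hq : q ≤ b) (hpq : f p < f q)
    (ht : t ∈ Ico p q) : f t < f q := by
  rcases le_or_gt t x₀ with htx | hxt
  · exact (hanti.antitoneOn ⟨hp, ht.1.trans htx⟩ ⟨hp.trans ht.1, htx⟩ ht.1).trans_lt hpq
  · exact hmono ⟨hxt.le, ht.2.le.trans hq⟩ ⟨hxt.le.trans ht.2.le, hq⟩ ht.2

end Valley

theorem integral_exp_div_eq_exp_mul (g : ℝ → ℝ) (a b c h : ℝ) :
    ∫ t in a..b, exp (g t / h) = exp (g c / h) * ∫ t in a..b, exp ((g t - g c) / h) := by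
  rw [← intervalIntegral.integral_const_mul]
  congr 1 with t
  rw [← exp_add]
  ring_nf

theorem exists_div_eq_mul_one_add_of_abs_sub_le {A B m₁ m₂ K₁ K₂ h : ℝ} (hm₁ : 0 < m₁)
    (hm₂ : 0 < m₂) (hh : 0 < h) (hA : |A - h / m₁| ≤ K₁ * h ^ 2)
    (hB : |B - h / m₂| ≤ K₂ * h ^ 2) (hsmall : m₂ * K₂ * h ≤ 1 / 2) :
    ∃ r, |r| ≤ 2 * (m₁ * K₁ + m₂ * K₂) ∧ A / B = m₂ / m₁ * (1 + r * h) := by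
  have hrel : ∀ {C m K : ℝ}, 0 < m → |C - h / m| ≤ K * h ^ 2 → |m * C / h - 1| ≤ m * K * h :=
      fun {C m K} hm hC =>
    calc |m * C / h - 1| = m / h * |C - h / m| := by
          rw [← abs_of_pos (div_pos hm hh), ← abs_mul]
          congr 1
          field_simp
      _ ≤ m / h * (K * h ^ 2) := by gcongr
      _ = m * K * h := by field_simp
  set u := m₁ * A / h - 1 with hu_def
  set v := m₂ * B / h - 1 with hv_def
  have hu : |u| ≤ m₁ * K₁ * h := hrel hm₁ hA
  have hv : |v| ≤ m₂ * K₂ * h := hrel hm₂ hB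
  have hv' : 1 / 2 ≤ 1 + v := by linarith [neg_abs_le v]
  have hA' : A = h * (1 + u) / m₁ := by rw [hu_def]; field_simp; ring
  have hB' : B = h * (1 + v) / m₂ := by rw [hv_def]; field_simp; ring
  refine ⟨(u - v) / ((1 + v) * h), ?_, ?_⟩
  · have hK : 0 ≤ (m₁ * K₁ + m₂ * K₂) * h := by linarith [abs_nonneg u, abs_nonneg v]
    have hpos : 0 < (1 + v) * h := mul_pos (by linarith) hh
    rw [abs_div, abs_of_pos hpos, div_le_iff₀ hpos]
    calc |u - v| ≤ m₁ * K₁ * h + m₂ * K₂ * h := (abs_sub _ _).trans (add_le_add hu hv)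
      _ ≤ 2 * (m₁ * K₁ + m₂ * K₂) * ((1 + v) * h) := by
          nlinarith [mul_nonneg hK (by linarith : 0 ≤ 2 * (1 + v) - 1)]
  · rw [hA', hB']
    field_simp
    ring

theorem integral_exp_div_div_integral_exp_div_eq {g : ℝ → ℝ} {a x b m₁ m₂ K₁ K₂ h : ℝ}
    (hm₁ : 0 < m₁) (hm₂ : 0 < m₂) (hh : 0 < h) (hsmall : m₂ * K₂ * h ≤ 1 / 2)
    (hA : |(∫ t in a..x, exp ((g t - g a) / h)) - h / m₁| ≤ K₁ * h ^ 2)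
    (hB : |(∫ t in a..b, exp ((g t - g b) / h)) - h / m₂| ≤ K₂ * h ^ 2) :
    ∃ r, |r| ≤ 2 * (m₁ * K₁ + m₂ * K₂) ∧
      (∫ t in a..x, exp (g t / h)) / (∫ t in a..b, exp (g t / h))
        = m₂ / m₁ * exp ((g a - g b) / h) * (1 + r * h) := by
  obtain ⟨r, hr, hratio⟩ := exists_div_eq_mul_one_add_of_abs_sub_le hm₁ hm₂ hh hA hB hsmall
  refine ⟨r, hr, ?_⟩
  rw [integral_exp_div_eq_exp_mul (b := x) (c := a), integral_exp_div_eq_exp_mul (b := b) (c := b),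
    mul_div_mul_comm, hratio, ← exp_sub, sub_div]
  ring

/-- One-dimensional Laplace asymptotics for the exit probability:
under the stated assumptions on `f`, for fixed `x ∈ (z₁,z₂)` with `f(x) < f(z₁)`,
as `h → 0`,
`w_h(x) = −(f'(z₂)/f'(z₁)) e^{−(2/h)(f(z₂)−f(z₁))} (1 + O(h))`. -/
theorem one_dim_exit_probability_asymptotics (f : ℝ → ℝ) (hf : ContDiff ℝ (⊤ : ℕ∞) f)
    (z₁ z₂ : ℝ) (hz : z₁ < z₂)
    (hd1 : deriv f z₁ < 0) (hd2 : 0 < deriv f z₂) (hf12 : f z₁ < f z₂)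
    (hcrit : ∃! x₀ : ℝ, x₀ ∈ Set.Ioo z₁ z₂ ∧ deriv f x₀ = 0)
    (x : ℝ) (hx : x ∈ Set.Ioo z₁ z₂) (hfx : f x < f z₁) :
    ∃ C > (0:ℝ), ∃ h₀ > (0:ℝ), ∀ h : ℝ, 0 < h → h < h₀ → ∃ r : ℝ, |r| ≤ C ∧
      (∫ t in z₁..x, Real.exp (2 * f t / h)) / (∫ t in z₁..z₂, Real.exp (2 * f t / h))
        = -(deriv f z₂ / deriv f z₁) * Real.exp (-(2 / h) * (f z₂ - f z₁)) * (1 + r * h) := by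
  have hf₂ : ContDiff ℝ 2 f := hf.of_le (WithTop.coe_le_coe.2 le_top)
  obtain ⟨x₀, ⟨hx₀, -⟩, huniq⟩ := hcrit
  obtain ⟨hanti, hmono⟩ := strictAntiOn_and_strictMonoOn_of_deriv_ne_zero (hf₂.of_le one_le_two)
    hd1 hd2 hx₀ fun t ht htx h0 => htx (huniq t ⟨ht, h0⟩)
  have hlt₁ : ∀ t ∈ Ioc z₁ x, 2 * f t < 2 * f z₁ := fun t ht => by
    linarith [apply_lt_left_of_mem_Ioc hanti hmono le_rfl hx.2.le hfx ht]
  have hlt₂ : ∀ t ∈ Ico z₁ z₂, 2 * f t < 2 * f z₂ := fun t ht => by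
    linarith [apply_lt_right_of_mem_Ico hanti hmono le_rfl le_rfl hf12 ht]
  have hdg : ∀ z, deriv (fun t => 2 * f t) z = 2 * deriv f z :=
    fun z => deriv_const_mul _ ((hf₂.differentiable two_ne_zero) z)
  obtain ⟨K₁, hK₁, hA⟩ := laplace_left_endpoint (contDiff_const.mul hf₂) hx.1 hlt₁
    (by rw [hdg]; linarith)
  obtain ⟨K₂, hK₂, hB⟩ := laplace_right_endpoint (contDiff_const.mul hf₂) hz hlt₂
    (by rw [hdg]; linarith)
  have hm₁ : 0 < -(2 * deriv f z₁) := by linarith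
  have hm₂ : 0 < 2 * deriv f z₂ := by linarith
  refine ⟨2 * (-(2 * deriv f z₁) * K₁ + 2 * deriv f z₂ * K₂), by positivity,
    1 / (2 * (2 * deriv f z₂ * K₂)), by positivity, fun h hh hh₀ => ?_⟩
  obtain ⟨r, hr, hratio⟩ := integral_exp_div_div_integral_exp_div_eq hm₁ hm₂ hh
    (by rw [lt_div_iff₀ (by positivity)] at hh₀; linarith)
    (hdg z₁ ▸ hA h hh) (hdg z₂ ▸ hB h hh)
  refine ⟨r, hr, ?_⟩
  rw [hratio, div_neg, mul_div_mul_left _ _ two_ne_zero,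
    show (2 * f z₁ - 2 * f z₂) / h = -(2 / h) * (f z₂ - f z₁) by ring]
end

section
/- Agmon-weighted energy identity in one dimension: let I = (a,b) ⊆ ℝ be a bounded interval, f, φ : cl(I) → ℝ Lipschitz with f smooth, h > 0, and u ∈ C²(cl(I)) with u(a) = u(b) = 0. Then for the one-dimensional Witten Laplacian Δ_{f,h}^{(0)} u = −h² u'' + ((f')² + h f'') u one has ⟨Δ_{f,h}^{(0)} u, e^{2φ/h} u⟩_{L²(I)} = h² ∫_I ((e^{φ/h}u)')² + ∫_I ((f')² − (φ')² + h f'') (e^{φ/h}u)². -/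
open MeasureTheory
open Filter Set


/-- Integration by parts for a Lipschitz bounded `g` against a Lipschitz `ψ`
vanishing outside `Ioo a b`, with a.e. derivatives (Lean's `deriv`). -/
lemma lipschitz_parts {g ψ : ℝ → ℝ} {Kg Kψ : NNReal} {a b : ℝ}
    (hg : LipschitzWith Kg g) (hψ : LipschitzWith Kψ ψ) {C Cψ : ℝ}
    (hgb : ∀ x, |g x| ≤ C) (hψb : ∀ x, |ψ x| ≤ Cψ)
    (hψ0 : ∀ x, x ∉ Set.Ioo a b → ψ x = 0) :
    ∫ x, (g x * deriv ψ x + deriv g x * ψ x) = 0 := by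
  have hC0 : 0 ≤ C := le_trans (abs_nonneg _) (hgb 0)
  have hCψ0 : 0 ≤ Cψ := le_trans (abs_nonneg _) (hψb 0)
  set t : ℕ → ℝ := fun n => 1 / (n + 1) with ht
  have htpos : ∀ n, 0 < t n := fun n => by positivity
  have htle : ∀ n, t n ≤ 1 := by
    intro n
    rw [ht]
    rw [div_le_one (by positivity)]
    simp
  have htlim : Tendsto t atTop (nhds 0) := tendsto_one_div_add_atTop_nhds_zero_nat
  have htlim' : Tendsto t atTop (nhdsWithin 0 {(0:ℝ)}ᶜ) := by
    apply tendsto_nhdsWithin_of_tendsto_nhds_of_eventually_within _ htlim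
    exact Eventually.of_forall fun n => (htpos n).ne'
  have htneg : Tendsto (fun n => -(t n)) atTop (nhdsWithin 0 {(0:ℝ)}ᶜ) := by
    apply tendsto_nhdsWithin_of_tendsto_nhds_of_eventually_within _ (htlim.neg.congr (by simp) |>.mono_right (by simp))
    exact Eventually.of_forall fun n => by simpa using (htpos n).ne'
  -- compact support of ψ and integrability
  have hψcs : HasCompactSupport ψ :=
    HasCompactSupport.intro isCompact_Icc
      (fun x hx => hψ0 x (fun hmem => hx ⟨hmem.1.le, hmem.2.le⟩))
  have hint_shift : ∀ s : ℝ, Integrable (fun x => g x * ψ (x + s)) := by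
    intro s
    have hcs : HasCompactSupport (fun x => ψ (x + s)) :=
      hψcs.comp_homeomorph (Homeomorph.addRight s)
    have : HasCompactSupport (fun x => g x * ψ (x + s)) := hcs.mul_left
    exact Continuous.integrable_of_hasCompactSupport
      (hg.continuous.mul (hψ.continuous.comp (continuous_id.add continuous_const))) this
  have hint0 : Integrable (fun x => g x * ψ x) := by
    simpa using hint_shift 0
  have hint_shift' : ∀ s : ℝ, Integrable (fun x => g (x - s) * ψ x) := by
    intro s
    have : HasCompactSupport (fun x => g (x - s) * ψ x) := hψcs.mul_left
    exact Continuous.integrable_of_hasCompactSupport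
      (((hg.continuous.comp (continuous_id.sub continuous_const))).mul hψ.continuous) this
  -- change of variables
  have hcov : ∀ s : ℝ, (∫ x, g x * ψ (x + s)) = ∫ x, g (x - s) * ψ x := by
    intro s
    have := MeasureTheory.integral_add_right_eq_self (μ := volume)
      (fun y => g (y - s) * ψ y) s
    simpa using this
  set F : ℕ → ℝ → ℝ := fun n x => g x * ((ψ (x + t n) - ψ x) / t n) with hF
  set G : ℕ → ℝ → ℝ := fun n x => ((g (x - t n) - g x) / t n) * ψ x with hG
  have heq : ∀ n, (∫ x, F n x) = ∫ x, G n x := by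
    intro n
    have h1 : (∫ x, F n x) = ((∫ x, g x * ψ (x + t n)) - ∫ x, g x * ψ x) / t n := by
      rw [← integral_sub (hint_shift (t n)) hint0, ← integral_div]
      congr 1; ext x; ring
    have h2 : (∫ x, G n x) = ((∫ x, g (x - t n) * ψ x) - ∫ x, g x * ψ x) / t n := by
      rw [← integral_sub (hint_shift' (t n)) hint0, ← integral_div]
      congr 1; ext x; ring
    rw [h1, h2, hcov]
  have hbound1_int : Integrable (fun x =>
      (C * (Kψ : ℝ)) * Set.indicator (Set.Icc (a - 1) b) (fun _ => (1:ℝ)) x) := by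
    apply Integrable.const_mul
    rw [integrable_indicator_iff measurableSet_Icc]
    exact integrableOn_const measure_Icc_lt_top.ne
  have hlim1 : Tendsto (fun n => ∫ x, F n x) atTop (nhds (∫ x, g x * deriv ψ x)) := by
    refine tendsto_integral_of_dominated_convergence _ ?_ hbound1_int ?_ ?_
    · intro n
      exact ((hg.continuous.mul (((hψ.continuous.comp (continuous_id.add continuous_const)).sub
        hψ.continuous).div_const _))).aestronglyMeasurable
    · intro n
      refine Filter.Eventually.of_forall fun x => ?_
      by_cases hx : x ∈ Set.Icc (a-1) b
      · rw [Set.indicator_of_mem hx, mul_one]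
        have h1 : |ψ (x + t n) - ψ x| ≤ (Kψ : ℝ) * t n := by
          have := hψ.dist_le_mul (x + t n) x
          rw [Real.dist_eq, Real.dist_eq] at this
          simpa [abs_of_pos (htpos n)] using this
        have : ‖F n x‖ = |g x| * (|ψ (x + t n) - ψ x| / t n) := by
          rw [hF]
          simp [abs_mul, abs_div, abs_of_pos (htpos n)]
        rw [this]
        have h2 : |ψ (x + t n) - ψ x| / t n ≤ (Kψ : ℝ) :=
          (div_le_iff₀ (htpos n)).2 (by linarith)
        exact mul_le_mul (b := C) (d := (Kψ : ℝ)) (hgb x) h2 (by positivity) hC0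
      · rw [Set.indicator_of_notMem hx]
        have hx' : x < a - 1 ∨ b < x := by
          rcases lt_or_ge x (a-1) with h' | h'
          · exact Or.inl h'
          · right
            by_contra hb
            exact hx ⟨h', le_of_not_gt hb⟩
        have hz : ψ (x + t n) = 0 ∧ ψ x = 0 := by
          rcases hx' with h' | h'
          · constructor
            · exact hψ0 _ (fun hm => absurd hm.1 (by nlinarith [htle n]))
            · exact hψ0 _ (fun hm => absurd hm.1 (by nlinarith))
          · constructor
            · exact hψ0 _ (fun hm => absurd hm.2 (by nlinarith [htpos n]))
            · exact hψ0 _ (fun hm => absurd hm.2 (by nlinarith))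
        rw [hF]
        simp [hz.1, hz.2]
    · filter_upwards [hψ.ae_differentiableAt (μ := volume)] with x hx
      have hslope := hx.hasDerivAt.tendsto_slope_zero
      have comp := hslope.comp htlim'
      have : (fun n => F n x) = fun n => g x * ((t n)⁻¹ * (ψ (x + t n) - ψ x)) := by
        funext n
        rw [hF]; simp [div_eq_inv_mul]
      rw [this]
      simpa [smul_eq_mul] using (comp.const_mul (g x))
  have hbound2_int : Integrable (fun x => (Kg : ℝ) * |ψ x|) := by
    apply Integrable.const_mul
    exact (hψ.continuous.integrable_of_hasCompactSupport hψcs).abs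
  have hlim2 : Tendsto (fun n => ∫ x, G n x) atTop (nhds (∫ x, -deriv g x * ψ x)) := by
    refine tendsto_integral_of_dominated_convergence _ ?_ hbound2_int ?_ ?_
    · intro n
      exact ((((hg.continuous.comp (continuous_id.sub continuous_const)).sub
        hg.continuous).div_const _).mul hψ.continuous).aestronglyMeasurable
    · intro n
      refine Filter.Eventually.of_forall fun x => ?_
      have h1 : |g (x - t n) - g x| ≤ (Kg : ℝ) * t n := by
        have := hg.dist_le_mul (x - t n) x
        rw [Real.dist_eq, Real.dist_eq] at this
        simpa [abs_of_pos (htpos n)] using this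
      have hGn : ‖G n x‖ = (|g (x - t n) - g x| / t n) * |ψ x| := by
        rw [hG]; simp [abs_mul, abs_div, abs_of_pos (htpos n)]
      rw [hGn]
      have h2 : |g (x - t n) - g x| / t n ≤ (Kg : ℝ) := (div_le_iff₀ (htpos n)).2 (by linarith)
      exact mul_le_mul h2 le_rfl (abs_nonneg _) (NNReal.coe_nonneg _)
    · filter_upwards [hg.ae_differentiableAt (μ := volume)] with x hx
      have hslope := hx.hasDerivAt.tendsto_slope_zero
      have comp := hslope.comp htneg
      have hGx : (fun n => G n x) = fun n => (-((-t n)⁻¹ * (g (x + -t n) - g x))) * ψ x := by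
        funext n
        rw [hG]
        rw [← sub_eq_add_neg, inv_neg]
        ring
      rw [hGx]
      have hten : Tendsto (fun n => -((-t n)⁻¹ * (g (x + -t n) - g x))) atTop
          (nhds (-(deriv g x))) := by
        simpa [smul_eq_mul] using comp.neg
      simpa using hten.mul_const (ψ x)
  have hderivψ0 : ∀ x, x ∉ Set.Icc a b → deriv ψ x = 0 := by
    intro x hx
    have hopen : IsOpen (Set.Icc a b)ᶜ := isClosed_Icc.isOpen_compl
    have hev : ψ =ᶠ[nhds x] (fun _ => (0:ℝ)) := by
      filter_upwards [hopen.mem_nhds hx] with y hy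
      exact hψ0 y (fun hm => hy ⟨hm.1.le, hm.2.le⟩)
    rw [hev.deriv_eq, deriv_const]
  have hboundab_int : Integrable (fun x =>
      (C * (Kψ : ℝ)) * Set.indicator (Set.Icc a b) (fun _ => (1:ℝ)) x) := by
    apply Integrable.const_mul
    rw [integrable_indicator_iff measurableSet_Icc]
    exact integrableOn_const measure_Icc_lt_top.ne
  have int1 : Integrable (fun x => g x * deriv ψ x) := by
    refine Integrable.mono' hboundab_int
      ((hg.continuous.measurable.mul (measurable_deriv ψ)).aestronglyMeasurable)
      (Filter.Eventually.of_forall fun x => ?_)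
    by_cases hx : x ∈ Set.Icc a b
    · rw [Set.indicator_of_mem hx, mul_one]
      have hd : ‖deriv ψ x‖ ≤ (Kψ : ℝ) := norm_deriv_le_of_lipschitz (𝕜 := ℝ) hψ
      calc ‖g x * deriv ψ x‖ = |g x| * ‖deriv ψ x‖ := by rw [norm_mul]; rfl
        _ ≤ C * (Kψ : ℝ) := mul_le_mul (hgb x) hd (norm_nonneg _) hC0
    · rw [Set.indicator_of_notMem hx, mul_zero, hderivψ0 x hx, mul_zero]
      simp
  have int2 : Integrable (fun x => deriv g x * ψ x) := by
    refine Integrable.mono' hbound2_int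
      (((measurable_deriv g).mul hψ.continuous.measurable).aestronglyMeasurable)
      (Filter.Eventually.of_forall fun x => ?_)
    have hd : ‖deriv g x‖ ≤ (Kg : ℝ) := norm_deriv_le_of_lipschitz (𝕜 := ℝ) hg
    calc ‖deriv g x * ψ x‖ = ‖deriv g x‖ * |ψ x| := by rw [norm_mul]; rfl
      _ ≤ (Kg : ℝ) * |ψ x| := mul_le_mul_of_nonneg_right hd (abs_nonneg _)
  have hkey : (∫ x, g x * deriv ψ x) = ∫ x, -deriv g x * ψ x :=
    tendsto_nhds_unique hlim1 (hlim2.congr (fun n => (heq n).symm))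
  have hneg : (∫ x, -deriv g x * ψ x) = - ∫ x, deriv g x * ψ x := by
    rw [← integral_neg]
    congr 1; funext x; ring
  rw [integral_add int1 int2, hkey, hneg]
  ring

/-- `C¹` on a nontrivial compact interval implies Lipschitz there. -/
lemma contDiffOn_Icc_lipschitzOnWith {c d : ℝ} (hcd : c < d) {F : ℝ → ℝ}
    (hF : ContDiffOn ℝ 1 F (Set.Icc c d)) :
    ∃ K : NNReal, LipschitzOnWith K F (Set.Icc c d) := by
  have hU : UniqueDiffOn ℝ (Set.Icc c d) := uniqueDiffOn_Icc hcd
  have hcont := hF.continuousOn_fderivWithin hU le_rfl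
  obtain ⟨C, hC⟩ := isCompact_Icc.exists_bound_of_continuousOn hcont
  refine ⟨C.toNNReal, (convex_Icc c d).lipschitzOnWith_of_nnnorm_fderivWithin_le
    (hF.differentiableOn (by norm_num)) (fun x hx => ?_)⟩
  rw [← NNReal.coe_le_coe, coe_nnnorm, Real.coe_toNNReal']
  exact (hC x hx).trans (le_max_left _ _)

/-- Agmon-weighted energy identity in one dimension: for the
one-dimensional Witten Laplacian `Δ_{f,h}^{(0)} u = −h² u'' + ((f')² + h f'') u`,
any Lipschitz `φ` and any `u ∈ C²([a,b])` with `u(a) = u(b) = 0`,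
`⟨Δ_{f,h}^{(0)} u, e^{2φ/h} u⟩_{L²(I)}
  = h² ∫_I ((e^{φ/h}u)')² + ∫_I ((f')² − (φ')² + h f'') (e^{φ/h}u)²`. -/
theorem one_dim_agmon_energy_identity (a b h : ℝ) (hab : a < b) (hh : 0 < h)
    (f : ℝ → ℝ) (hf : ContDiffOn ℝ (⊤ : ℕ∞) f (Set.Icc a b))
    (φ : ℝ → ℝ) (hφ : ∃ K : NNReal, LipschitzOnWith K φ (Set.Icc a b))
    (u : ℝ → ℝ) (hu : ContDiffOn ℝ 2 u (Set.Icc a b)) (hua : u a = 0) (hub : u b = 0) :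
    (∫ x in a..b,
        (-h ^ 2 * deriv (deriv u) x + ((deriv f x) ^ 2 + h * deriv (deriv f) x) * u x) *
          (Real.exp (2 * φ x / h) * u x))
      = h ^ 2 * (∫ x in a..b, (deriv (fun y => Real.exp (φ y / h) * u y) x) ^ 2)
        + (∫ x in a..b,
            ((deriv f x) ^ 2 - (deriv φ x) ^ 2 + h * deriv (deriv f) x) *
              (Real.exp (φ x / h) * u x) ^ 2) := by
  obtain ⟨Kφ, hφK⟩ := hφ
  obtain ⟨φt, hφtlip, hφeq⟩ := hφK.extend_real
  have hU : UniqueDiffOn ℝ (Set.Icc a b) := uniqueDiffOn_Icc hab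
  -- the clamp function
  set cl : ℝ → ℝ := fun x => max a (min x b) with hcl_def
  have hcl_lip : LipschitzWith 1 cl := by
    apply LipschitzWith.of_dist_le_mul
    intro x y
    rw [Real.dist_eq, Real.dist_eq, NNReal.coe_one, one_mul]
    have h1 : |cl x - cl y| ≤ |min x b - min y b| := by
      rw [hcl_def]
      simpa [max_comm] using abs_max_sub_max_le_abs (min x b) (min y b) a
    refine h1.trans ?_
    simpa using abs_min_sub_min_le_max x b y b
  have hcl_mem : ∀ x, cl x ∈ Set.Icc a b := by
    intro x
    constructor
    · exact le_max_left _ _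
    · exact max_le hab.le (min_le_right _ _)
  have hcl_eq : ∀ x ∈ Set.Icc a b, cl x = x := by
    intro x hx
    rw [hcl_def]
    simp only [min_eq_left hx.2, max_eq_right hx.1]
  have hcl_left : ∀ x, x ≤ a → cl x = a := by
    intro x hx
    show a ⊔ x ⊓ b = a
    exact sup_eq_left.2 (le_trans inf_le_left hx)
  have hcl_right : ∀ x, b ≤ x → cl x = b := by
    intro x hx
    show a ⊔ x ⊓ b = b
    rw [inf_eq_right.2 hx]
    exact sup_eq_right.2 hab.le
  -- derivatives of u and f on the interval
  set u1 : ℝ → ℝ := derivWithin u (Set.Icc a b) with hu1_def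
  set u2 : ℝ → ℝ := derivWithin u1 (Set.Icc a b) with hu2_def
  have hu1c : ContDiffOn ℝ 1 u1 (Set.Icc a b) := hu.derivWithin hU (by norm_num)
  have hu2c : ContinuousOn u2 (Set.Icc a b) := (hu1c.derivWithin hU (m := 0) (by norm_num)).continuousOn
  have hf' : ContDiffOn ℝ 2 f (Set.Icc a b) := hf.of_le (by rw [show ((2:WithTop ℕ∞)) = ((2:ℕ∞) : WithTop ℕ∞) by rfl]; exact WithTop.coe_le_coe.2 le_top)
  set f1 : ℝ → ℝ := derivWithin f (Set.Icc a b) with hf1_def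
  set f2 : ℝ → ℝ := derivWithin f1 (Set.Icc a b) with hf2_def
  have hf1c : ContDiffOn ℝ 1 f1 (Set.Icc a b) := hf'.derivWithin hU (by norm_num)
  have hf2c : ContinuousOn f2 (Set.Icc a b) := (hf1c.derivWithin hU (m := 0) (by norm_num)).continuousOn
  have hder_u : ∀ x ∈ Set.Ioo a b, HasDerivAt u (u1 x) x := by
    intro x hx
    exact ((hu.differentiableOn (by norm_num) x
      (Set.Ioo_subset_Icc_self hx)).hasDerivWithinAt).hasDerivAt (Icc_mem_nhds hx.1 hx.2)
  have hder_u1 : ∀ x ∈ Set.Ioo a b, HasDerivAt u1 (u2 x) x := by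
    intro x hx
    exact ((hu1c.differentiableOn (by norm_num) x
      (Set.Ioo_subset_Icc_self hx)).hasDerivWithinAt).hasDerivAt (Icc_mem_nhds hx.1 hx.2)
  have hder_f : ∀ x ∈ Set.Ioo a b, HasDerivAt f (f1 x) x := by
    intro x hx
    exact ((hf'.differentiableOn (by norm_num) x
      (Set.Ioo_subset_Icc_self hx)).hasDerivWithinAt).hasDerivAt (Icc_mem_nhds hx.1 hx.2)
  have hder_f1 : ∀ x ∈ Set.Ioo a b, HasDerivAt f1 (f2 x) x := by
    intro x hx
    exact ((hf1c.differentiableOn (by norm_num) x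
      (Set.Ioo_subset_Icc_self hx)).hasDerivWithinAt).hasDerivAt (Icc_mem_nhds hx.1 hx.2)
  -- bounds
  obtain ⟨Bu, hBu⟩ := isCompact_Icc.exists_bound_of_continuousOn hu.continuousOn
  obtain ⟨Bu1, hBu1⟩ := isCompact_Icc.exists_bound_of_continuousOn hu1c.continuousOn
  obtain ⟨Bu2, hBu2⟩ := isCompact_Icc.exists_bound_of_continuousOn hu2c
  obtain ⟨Bf1, hBf1⟩ := isCompact_Icc.exists_bound_of_continuousOn hf1c.continuousOn
  obtain ⟨Bf2, hBf2⟩ := isCompact_Icc.exists_bound_of_continuousOn hf2c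
  obtain ⟨Bφ, hBφ⟩ := isCompact_Icc.exists_bound_of_continuousOn hφK.continuousOn
  have haI : a ∈ Set.Icc a b := Set.left_mem_Icc.2 hab.le
  have hBu0 : 0 ≤ Bu := (norm_nonneg _).trans (hBu a haI)
  have hBu10 : 0 ≤ Bu1 := (norm_nonneg _).trans (hBu1 a haI)
  have hBφ0 : 0 ≤ Bφ := (norm_nonneg _).trans (hBφ a haI)
  -- the weight function g = exp(2φ/h) (globalized)
  set q : ℝ → ℝ := fun x => φt (cl x) with hq_def
  have hq_eq : ∀ x, q x = φ (cl x) := fun x => (hφeq (hcl_mem x)).symm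
  have hq_b : ∀ x, |q x| ≤ Bφ := by
    intro x
    rw [hq_eq]
    exact hBφ _ (hcl_mem x)
  set w : ℝ → ℝ := fun x => 2 * q x / h with hw_def
  set Mw : ℝ := |2 / h| * Bφ + 1 with hMw_def
  have hMw1 : (1:ℝ) ≤ Mw := by
    rw [hMw_def]
    have : 0 ≤ |2 / h| * Bφ := mul_nonneg (abs_nonneg _) hBφ0
    linarith
  have hw_b : ∀ x, |w x| ≤ Mw := by
    intro x
    have h1 : w x = (2 / h) * q x := by rw [hw_def]; ring
    rw [h1, abs_mul, hMw_def]
    have := mul_le_mul_of_nonneg_left (hq_b x) (abs_nonneg (2/h))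
    linarith
  have hlin : LipschitzWith (Real.nnabs (2 / h)) (fun s : ℝ => 2 * s / h) := by
    apply LipschitzWith.of_dist_le_mul
    intro x y
    rw [Real.dist_eq, Real.dist_eq, Real.coe_nnabs]
    have h1 : 2 * x / h - 2 * y / h = (2 / h) * (x - y) := by ring
    rw [h1, abs_mul]
  have hq_lip : LipschitzWith (Kφ * 1) q := hφtlip.comp hcl_lip
  have hw_lip : LipschitzWith (Real.nnabs (2 / h) * (Kφ * 1)) w := hlin.comp hq_lip
  obtain ⟨Ke, hKe⟩ := contDiffOn_Icc_lipschitzOnWith (show -Mw < Mw by linarith)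
    (Real.contDiff_exp.contDiffOn)
  set g : ℝ → ℝ := Real.exp ∘ w with hg_def
  have hg_lip : LipschitzWith (Ke * (Real.nnabs (2 / h) * (Kφ * 1))) g := by
    rw [← lipschitzOnWith_univ]
    exact hKe.comp (hw_lip.lipschitzOnWith (s := Set.univ)) (fun x _ => abs_le.1 (hw_b x))
  have hg_pos : ∀ x, 0 < g x := fun x => Real.exp_pos _
  have hg_b : ∀ x, |g x| ≤ Real.exp Mw := by
    intro x
    rw [abs_of_pos (hg_pos x)]
    exact Real.exp_le_exp.2 ((le_abs_self _).trans (hw_b x))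
  -- ψ = u·u' (globalized)
  set ul : ℝ → ℝ := fun y => u y * u1 y with hul_def
  have hul_cd : ContDiffOn ℝ 1 ul (Set.Icc a b) := (hu.of_le one_le_two).mul hu1c
  obtain ⟨Kψ₀, hKψ₀⟩ := contDiffOn_Icc_lipschitzOnWith hab hul_cd
  set ψ : ℝ → ℝ := ul ∘ cl with hψ_def
  have hψ_lip : LipschitzWith (Kψ₀ * 1) ψ := by
    rw [← lipschitzOnWith_univ]
    exact hKψ₀.comp (hcl_lip.lipschitzOnWith (s := Set.univ)) (fun x _ => hcl_mem x)
  have hψ_b : ∀ x, |ψ x| ≤ Bu * Bu1 := by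
    intro x
    rw [hψ_def]
    simp only [Function.comp_apply, hul_def]
    rw [abs_mul]
    exact mul_le_mul (hBu _ (hcl_mem x)) (hBu1 _ (hcl_mem x)) (abs_nonneg _) hBu0
  have hψ0 : ∀ x, x ∉ Set.Ioo a b → ψ x = 0 := by
    intro x hx
    rcases not_and_or.1 hx with h1 | h2
    · have hxa : x ≤ a := le_of_not_gt h1
      rw [hψ_def]
      simp only [Function.comp_apply, hul_def, hcl_left x hxa, hua, zero_mul]
    · have hxb : b ≤ x := le_of_not_gt h2
      rw [hψ_def]
      simp only [Function.comp_apply, hul_def, hcl_right x hxb, hub, zero_mul]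
  -- the integration-by-parts identity
  have hzero : ∫ x, (g x * deriv ψ x + deriv g x * ψ x) = 0 :=
    lipschitz_parts hg_lip hψ_lip hg_b hψ_b hψ0
  set v : ℝ → ℝ := fun y => Real.exp (φ y / h) * u y with hv_def
  have hIooMeas : MeasurableSet (Set.Ioo a b) := measurableSet_Ioo
  have hderivψ0 : ∀ x, x ∉ Set.Icc a b → deriv ψ x = 0 := by
    intro x hx
    have hev : ψ =ᶠ[nhds x] (fun _ => (0:ℝ)) := by
      filter_upwards [isClosed_Icc.isOpen_compl.mem_nhds hx] with y hy
      exact hψ0 y (fun hm => hy ⟨hm.1.le, hm.2.le⟩)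
    rw [hev.deriv_eq, deriv_const]
  have habnull : volume ({a, b} : Set ℝ) = 0 := by
    refine le_antisymm ?_ zero_le
    calc volume ({a, b} : Set ℝ) ≤ volume ({a} : Set ℝ) + volume ({b} : Set ℝ) := by
          rw [Set.insert_eq]; exact measure_union_le _ _
      _ = 0 := by simp
  have hDIoo : ∫ x in Set.Ioo a b, (g x * deriv ψ x + deriv g x * ψ x) = 0 := by
    have h1 : (fun x => g x * deriv ψ x + deriv g x * ψ x) =ᵐ[volume]
        (Set.Ioo a b).indicator (fun x => g x * deriv ψ x + deriv g x * ψ x) := by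
      have hae : ∀ᵐ x : ℝ, x ∉ ({a, b} : Set ℝ) := by
        rw [← compl_mem_ae_iff] at habnull
        exact habnull
      filter_upwards [hae] with x hx
      by_cases hmem : x ∈ Set.Ioo a b
      · rw [Set.indicator_of_mem hmem]
      · rw [Set.indicator_of_notMem hmem]
        have hxIcc : x ∉ Set.Icc a b := by
          intro hc
          rcases eq_or_lt_of_le hc.1 with h' | h'
          · exact hx (Or.inl h'.symm)
          rcases eq_or_lt_of_le hc.2 with h'' | h''
          · exact hx (Or.inr (by simp [h'']))
          · exact hmem ⟨h', h''⟩
        rw [hψ0 x (fun hm => hxIcc ⟨hm.1.le, hm.2.le⟩), hderivψ0 x hxIcc,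
          mul_zero, mul_zero, add_zero]
    rw [← integral_indicator hIooMeas, ← integral_congr_ae h1, hzero]
  -- pointwise identifications on `Ioo a b`
  have hmemIoo : ∀ x ∈ Set.Ioo a b, Set.Ioo a b ∈ nhds x := fun x hx => isOpen_Ioo.mem_nhds hx
  have hDu2 : ∀ x ∈ Set.Ioo a b, deriv (deriv u) x = u2 x := by
    intro x hx
    have hev : deriv u =ᶠ[nhds x] u1 := by
      filter_upwards [hmemIoo x hx] with y hy
      exact (hder_u y hy).deriv
    rw [hev.deriv_eq]
    exact (hder_u1 x hx).deriv
  have hDf1 : ∀ x ∈ Set.Ioo a b, deriv f x = f1 x := fun x hx => (hder_f x hx).deriv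
  have hDf2 : ∀ x ∈ Set.Ioo a b, deriv (deriv f) x = f2 x := by
    intro x hx
    have hev : deriv f =ᶠ[nhds x] f1 := by
      filter_upwards [hmemIoo x hx] with y hy
      exact (hder_f y hy).deriv
    rw [hev.deriv_eq]
    exact (hder_f1 x hx).deriv
  have hgval : ∀ x ∈ Set.Icc a b, g x = Real.exp (2 * φ x / h) := by
    intro x hx
    rw [hg_def]
    simp only [Function.comp_apply, hw_def, hq_def, hcl_eq x hx, ← hφeq hx]
  have hψval : ∀ x ∈ Set.Icc a b, ψ x = u x * u1 x := by
    intro x hx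
    rw [hψ_def]
    simp only [Function.comp_apply, hul_def, hcl_eq x hx]
  have hDψ : ∀ x ∈ Set.Ioo a b, deriv ψ x = u1 x * u1 x + u x * u2 x := by
    intro x hx
    have hev : ψ =ᶠ[nhds x] ul := by
      filter_upwards [hmemIoo x hx] with y hy
      rw [hψ_def]
      simp only [Function.comp_apply, hcl_eq y (Set.Ioo_subset_Icc_self hy)]
    rw [hev.deriv_eq]
    exact ((hder_u x hx).mul (hder_u1 x hx)).deriv
  have hφdiff : ∀ᵐ x : ℝ, x ∈ Set.Ioo a b → DifferentiableAt ℝ φ x := by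
    filter_upwards [hφK.ae_differentiableWithinAt_of_mem (μ := volume)] with x hx hmem
    exact (hx (Set.Ioo_subset_Icc_self hmem)).differentiableAt (Icc_mem_nhds hmem.1 hmem.2)
  have hp_bd : ∀ x ∈ Set.Ioo a b, |deriv φ x| ≤ (Kφ : ℝ) := by
    intro x hx
    simpa using norm_deriv_le_of_lipschitzOn (𝕜 := ℝ) (Icc_mem_nhds hx.1 hx.2) hφK
  have hDg : ∀ᵐ x : ℝ, x ∈ Set.Ioo a b →
      deriv g x = Real.exp (2 * φ x / h) * (2 * deriv φ x / h) := by
    filter_upwards [hφdiff] with x hd hx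
    have hev : g =ᶠ[nhds x] fun y => Real.exp (2 * φ y / h) := by
      filter_upwards [hmemIoo x hx] with y hy
      exact hgval y (Set.Ioo_subset_Icc_self hy)
    rw [hev.deriv_eq]
    exact ((((hd hx).hasDerivAt.const_mul 2).div_const h).exp).deriv
  have hDv : ∀ᵐ x : ℝ, x ∈ Set.Ioo a b →
      deriv v x = Real.exp (φ x / h) * (deriv φ x / h) * u x + Real.exp (φ x / h) * u1 x := by
    filter_upwards [hφdiff] with x hd hx
    exact ((((hd hx).hasDerivAt.div_const h).exp).mul (hder_u x hx)).deriv
  -- integrability on `Ioo a b`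
  have hconst_int : ∀ c : ℝ, IntegrableOn (fun _ => c) (Set.Ioo a b) volume := fun c =>
    integrableOn_const measure_Ioo_lt_top.ne
  have hEB : ∀ x ∈ Set.Icc a b, Real.exp (φ x / h) ≤ Real.exp (Bφ / h) := by
    intro x hx
    have := hBφ x hx
    rw [Real.norm_eq_abs] at this
    exact Real.exp_le_exp.2 (by
      rw [div_eq_mul_inv, div_eq_mul_inv]
      exact mul_le_mul_of_nonneg_right ((le_abs_self _).trans this) (inv_nonneg.2 hh.le))
  set Cv : ℝ := Real.exp (Bφ / h) * (((Kφ : ℝ) / h) * Bu + Bu1) with hCv_def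
  have intV : IntegrableOn (fun x => (deriv v x) ^ 2) (Set.Ioo a b) volume := by
    refine Integrable.mono' (hconst_int (Cv ^ 2))
      (((measurable_deriv v).pow_const 2).aestronglyMeasurable.restrict) ?_
    rw [ae_restrict_iff' hIooMeas]
    filter_upwards [hDv] with x hdv hx
    have hxI := Set.Ioo_subset_Icc_self hx
    have h1 : |deriv v x| ≤ Cv := by
      rw [hdv hx, hCv_def]
      have e1 : |Real.exp (φ x / h)| = Real.exp (φ x / h) := abs_of_pos (Real.exp_pos _)
      have hu_ := hBu x hxI
      rw [Real.norm_eq_abs] at hu_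
      have hu1_ := hBu1 x hxI
      rw [Real.norm_eq_abs] at hu1_
      have hp := hp_bd x hx
      calc |Real.exp (φ x / h) * (deriv φ x / h) * u x + Real.exp (φ x / h) * u1 x|
          ≤ |Real.exp (φ x / h) * (deriv φ x / h) * u x| + |Real.exp (φ x / h) * u1 x| :=
            abs_add_le _ _
        _ = Real.exp (φ x / h) * (|deriv φ x| / h) * |u x| + Real.exp (φ x / h) * |u1 x| := by
            rw [abs_mul, abs_mul, abs_mul, abs_div, e1, abs_of_pos hh]
        _ ≤ Real.exp (Bφ / h) * ((Kφ : ℝ) / h) * Bu + Real.exp (Bφ / h) * Bu1 := by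
            have hdivle : |deriv φ x| / h ≤ (Kφ : ℝ) / h := by
              rw [div_eq_mul_inv, div_eq_mul_inv]
              exact mul_le_mul_of_nonneg_right hp (inv_nonneg.2 hh.le)
            have a1 : Real.exp (φ x / h) * (|deriv φ x| / h)
                ≤ Real.exp (Bφ / h) * ((Kφ : ℝ) / h) :=
              mul_le_mul (hEB x hxI) hdivle (div_nonneg (abs_nonneg _) hh.le)
                (Real.exp_pos _).le
            have s1 : Real.exp (φ x / h) * (|deriv φ x| / h) * |u x|
                ≤ Real.exp (Bφ / h) * ((Kφ : ℝ) / h) * Bu :=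
              mul_le_mul a1 hu_ (abs_nonneg _)
                (mul_nonneg (Real.exp_pos _).le (div_nonneg (NNReal.coe_nonneg _) hh.le))
            have s2 : Real.exp (φ x / h) * |u1 x| ≤ Real.exp (Bφ / h) * Bu1 :=
              mul_le_mul (hEB x hxI) hu1_ (abs_nonneg _) (Real.exp_pos _).le
            exact add_le_add s1 s2
        _ = Real.exp (Bφ / h) * (((Kφ : ℝ) / h) * Bu + Bu1) := by ring
    rw [Real.norm_eq_abs, abs_of_nonneg (sq_nonneg _), ← sq_abs]
    exact pow_le_pow_left₀ (abs_nonneg _) h1 2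
  have hEu_meas : AEStronglyMeasurable (fun x => Real.exp (φ x / h) * u x)
      (volume.restrict (Set.Ioo a b)) := by
    refine ContinuousOn.aestronglyMeasurable ?_ hIooMeas
    exact (Real.continuous_exp.comp_continuousOn
      ((hφK.continuousOn.mono Set.Ioo_subset_Icc_self).div_const h)).mul
      (hu.continuousOn.mono Set.Ioo_subset_Icc_self)
  have intW : IntegrableOn (fun x =>
      ((deriv f x) ^ 2 - (deriv φ x) ^ 2 + h * deriv (deriv f) x) *
        (Real.exp (φ x / h) * u x) ^ 2) (Set.Ioo a b) volume := by
    refine Integrable.mono'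
      (hconst_int ((Bf1 ^ 2 + (Kφ : ℝ) ^ 2 + h * Bf2) * (Real.exp (Bφ / h) * Bu) ^ 2))
      ((((((measurable_deriv f).pow_const 2).sub
        ((measurable_deriv φ).pow_const 2)).add
        (measurable_const.mul (measurable_deriv (deriv f)))).aestronglyMeasurable.restrict.mul
        (hEu_meas.pow 2)) ) ?_
    rw [ae_restrict_iff' hIooMeas]
    refine Filter.Eventually.of_forall fun x => ?_
    intro hx
    have hxI := Set.Ioo_subset_Icc_self hx
    have hf1_ := hBf1 x hxI
    rw [Real.norm_eq_abs] at hf1_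
    have hf2_ := hBf2 x hxI
    rw [Real.norm_eq_abs] at hf2_
    have hu_ := hBu x hxI
    rw [Real.norm_eq_abs] at hu_
    have hp := hp_bd x hx
    have hfac : |(deriv f x) ^ 2 - (deriv φ x) ^ 2 + h * deriv (deriv f) x|
        ≤ Bf1 ^ 2 + (Kφ : ℝ) ^ 2 + h * Bf2 := by
      rw [hDf1 x hx, hDf2 x hx]
      calc |f1 x ^ 2 - deriv φ x ^ 2 + h * f2 x|
          ≤ |f1 x ^ 2| + |deriv φ x ^ 2| + |h * f2 x| := by
            rw [sub_eq_add_neg]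
            refine (abs_add_three _ _ _).trans ?_
            rw [abs_neg]
        _ ≤ Bf1 ^ 2 + (Kφ : ℝ) ^ 2 + h * Bf2 := by
            have t1 : |f1 x ^ 2| = |f1 x| ^ 2 := by rw [abs_of_nonneg (sq_nonneg _), sq_abs]
            have t2 : |deriv φ x ^ 2| = |deriv φ x| ^ 2 := by
              rw [abs_of_nonneg (sq_nonneg _), sq_abs]
            have t3 : |h * f2 x| = h * |f2 x| := by rw [abs_mul, abs_of_pos hh]
            rw [t1, t2, t3]
            have := pow_le_pow_left₀ (abs_nonneg _) hf1_ 2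
            have := pow_le_pow_left₀ (abs_nonneg _) hp 2
            have := mul_le_mul_of_nonneg_left hf2_ hh.le
            linarith
    have hEu : |Real.exp (φ x / h) * u x| ≤ Real.exp (Bφ / h) * Bu := by
      rw [abs_mul, abs_of_pos (Real.exp_pos _)]
      exact mul_le_mul (hEB x hxI) hu_ (abs_nonneg _) (Real.exp_pos _).le
    rw [Real.norm_eq_abs, abs_mul]
    have hsq : |(Real.exp (φ x / h) * u x) ^ 2| ≤ (Real.exp (Bφ / h) * Bu) ^ 2 := by
      rw [abs_of_nonneg (sq_nonneg _), ← sq_abs]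
      exact pow_le_pow_left₀ (abs_nonneg _) hEu 2
    have hBf20 : 0 ≤ Bf2 := (norm_nonneg _).trans (hBf2 a haI)
    exact mul_le_mul hfac hsq (abs_nonneg _)
      (add_nonneg (add_nonneg (sq_nonneg _) (sq_nonneg _)) (mul_nonneg hh.le hBf20))
  have intD : IntegrableOn (fun x => g x * deriv ψ x + deriv g x * ψ x)
      (Set.Ioo a b) volume := by
    refine Integrable.mono'
      (hconst_int (Real.exp Mw * ((Kψ₀ * 1 : NNReal) : ℝ)
        + ((Ke * (Real.nnabs (2 / h) * (Kφ * 1)) : NNReal) : ℝ) * (Bu * Bu1)))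
      (((hg_lip.continuous.measurable.mul (measurable_deriv ψ)).add
        ((measurable_deriv g).mul hψ_lip.continuous.measurable)).aestronglyMeasurable.restrict) ?_
    refine Filter.Eventually.of_forall fun x => ?_
    have t1 : ‖deriv ψ x‖ ≤ ((Kψ₀ * 1 : NNReal) : ℝ) := norm_deriv_le_of_lipschitz (𝕜 := ℝ) hψ_lip
    have t2 : ‖deriv g x‖ ≤ ((Ke * (Real.nnabs (2 / h) * (Kφ * 1)) : NNReal) : ℝ) :=
      norm_deriv_le_of_lipschitz (𝕜 := ℝ) hg_lip
    rw [Real.norm_eq_abs] at t1 t2 ⊢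
    calc |g x * deriv ψ x + deriv g x * ψ x|
        ≤ |g x| * |deriv ψ x| + |deriv g x| * |ψ x| := by
          refine (abs_add_le _ _).trans ?_
          rw [abs_mul, abs_mul]
      _ ≤ Real.exp Mw * ((Kψ₀ * 1 : NNReal) : ℝ)
          + ((Ke * (Real.nnabs (2 / h) * (Kφ * 1)) : NNReal) : ℝ) * (Bu * Bu1) := by
          have := hg_b x
          have := hψ_b x
          have h0 : (0:ℝ) ≤ Bu * Bu1 := mul_nonneg hBu0 hBu10
          nlinarith [abs_nonneg (g x), abs_nonneg (deriv ψ x), abs_nonneg (deriv g x),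
            abs_nonneg (ψ x), NNReal.coe_nonneg (Kψ₀ * 1),
            NNReal.coe_nonneg (Ke * (Real.nnabs (2 / h) * (Kφ * 1)))]
  -- the pointwise algebraic identity, a.e. on `Ioo a b`
  have haeL : (fun x => (-h ^ 2 * deriv (deriv u) x +
        ((deriv f x) ^ 2 + h * deriv (deriv f) x) * u x) * (Real.exp (2 * φ x / h) * u x))
      =ᵐ[volume.restrict (Set.Ioo a b)]
      (fun x => (h ^ 2 * (deriv v x) ^ 2
        + ((deriv f x) ^ 2 - (deriv φ x) ^ 2 + h * deriv (deriv f) x) *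
            (Real.exp (φ x / h) * u x) ^ 2)
        - h ^ 2 * (g x * deriv ψ x + deriv g x * ψ x)) := by
    rw [Filter.EventuallyEq, ae_restrict_iff' hIooMeas]
    filter_upwards [hDg, hDv] with x h1 h2 hx
    have hxI := Set.Ioo_subset_Icc_self hx
    rw [hDu2 x hx, hDf1 x hx, hDf2 x hx, h1 hx, h2 hx, hgval x hxI, hψval x hxI, hDψ x hx]
    have hexp2 : Real.exp (2 * φ x / h) = Real.exp (φ x / h) * Real.exp (φ x / h) := by
      rw [← Real.exp_add]
      congr 1
      ring
    rw [hexp2]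
    field_simp
    ring
  -- final assembly
  rw [intervalIntegral.integral_of_le hab.le, intervalIntegral.integral_of_le hab.le,
    intervalIntegral.integral_of_le hab.le, integral_Ioc_eq_integral_Ioo,
    integral_Ioc_eq_integral_Ioo, integral_Ioc_eq_integral_Ioo]
  rw [integral_congr_ae haeL]
  have hABint : Integrable (fun x => h ^ 2 * (deriv v x) ^ 2
      + ((deriv f x) ^ 2 - (deriv φ x) ^ 2 + h * deriv (deriv f) x) *
          (Real.exp (φ x / h) * u x) ^ 2) (volume.restrict (Set.Ioo a b)) :=
    (intV.const_mul (h ^ 2)).add intW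
  have hCint : Integrable (fun x => h ^ 2 * (g x * deriv ψ x + deriv g x * ψ x))
      (volume.restrict (Set.Ioo a b)) := intD.const_mul (h ^ 2)
  rw [integral_sub hABint hCint]
  rw [integral_add (intV.const_mul (h ^ 2)) intW]
  rw [integral_const_mul, integral_const_mul, hDIoo]
  ring
end
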